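/- arXiv:1411.5707 — 2 statements merged into one kernel-verified Lean document; each statement's English description precedes it below -/
import Mathlib

section
/- Let f1,...,f6 ∈ L²(ℝ), M1, M4 > 0, and let φ_{M1}, φ_{M4} be bump functions adapted to the annuli {|ξ| ∼ M1}, {|ξ| ∼ M4} respectively, with values in [0,1]. Then ∫_{ξ1+⋯+ξ6=0} φ_{M1}(ξ2+ξ3) φ_{M4}(ξ5+ξ6) ∏_{j=1}^{6} |f_j(ξ_j)| ≤ C · M1 · M4 · ∏_{j=1}^{6} ‖f_j‖_{L²}, with C independent of M1, M4 and the f_j. -/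
open MeasureTheory ENNReal Set Filter Function

namespace SixLinearAux

noncomputable def S (u : ℝ → ℝ≥0∞) : ℝ≥0∞ := (∫⁻ x, u x ^ (2:ℝ)) ^ ((1:ℝ)/2)

lemma ofReal_int_le (f : ℝ → ℝ) (hf : ∀ x, 0 ≤ f x) :
    ENNReal.ofReal (∫ x, f x) ≤ ∫⁻ x, ENNReal.ofReal (f x) := by
  by_cases hi : Integrable f volume
  · exact le_of_eq (ofReal_integral_eq_lintegral_ofReal hi (Eventually.of_forall hf))
  · rw [integral_undef hi]; simp

lemma lcs {u v : ℝ → ℝ≥0∞} (hu : AEMeasurable u volume) (hv : AEMeasurable v volume) :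
    ∫⁻ x, u x * v x ≤ S u * S v := by
  have h := ENNReal.lintegral_mul_le_Lp_mul_Lq volume (p := 2) (q := 2)
    ⟨by norm_num, by norm_num, by norm_num⟩ hu hv
  simpa [S] using h

lemma S_sub (v : ℝ → ℝ≥0∞) (hv : Measurable v) (c : ℝ) :
    S (fun x => v (c - x)) = S v := by
  unfold S
  congr 1
  exact (Measure.measurePreserving_sub_left volume c).lintegral_comp (hv.pow_const _)

lemma bilin (Ψ u v : ℝ → ℝ≥0∞) (hΨ : Measurable Ψ) (hu : Measurable u) (hv : Measurable v) :
    ∫⁻ x, u x * ∫⁻ y, v y * Ψ (x + y) ≤ (∫⁻ t, Ψ t) * (S u * S v) := by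
  have h1 : ∀ x : ℝ, (∫⁻ y, v y * Ψ (x + y)) = ∫⁻ w, v (w - x) * Ψ w := by
    intro x
    have h := lintegral_add_left_eq_self (μ := volume) (fun w => v (w - x) * Ψ w) x
    simp only [add_sub_cancel_left] at h
    exact h
  calc ∫⁻ x, u x * ∫⁻ y, v y * Ψ (x + y)
      = ∫⁻ x, ∫⁻ w, u x * (v (w - x) * Ψ w) := by
        refine lintegral_congr fun x => ?_
        rw [h1 x]
        exact (lintegral_const_mul (u x) (f := fun w => v (w - x) * Ψ w) (by fun_prop)).symm
    _ = ∫⁻ w, ∫⁻ x, u x * (v (w - x) * Ψ w) := by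
        refine lintegral_lintegral_swap ?_
        exact (((hu.comp measurable_fst)).mul
          (((hv.comp (measurable_snd.sub measurable_fst))).mul
            (hΨ.comp measurable_snd))).aemeasurable
    _ = ∫⁻ w, Ψ w * ∫⁻ x, u x * v (w - x) := by
        refine lintegral_congr fun w => ?_
        rw [← lintegral_const_mul (Ψ w) (f := fun x => u x * v (w - x)) (by fun_prop)]
        exact lintegral_congr fun x => by ring
    _ ≤ ∫⁻ w, Ψ w * (S u * S v) := by
        refine lintegral_mono fun w => ?_
        refine mul_le_mul_right ?_ _
        calc ∫⁻ x, u x * v (w - x)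
            ≤ S u * S (fun x => v (w - x)) :=
              lcs hu.aemeasurable (hv.comp (measurable_const.sub measurable_id)).aemeasurable
          _ = S u * S v := by rw [S_sub v hv w]
    _ = (∫⁻ t, Ψ t) * (S u * S v) := lintegral_mul_const _ hΨ

lemma core (Φ1 Φ4 u1 u2 u3 u4 : ℝ → ℝ≥0∞) (hΦ1 : Measurable Φ1) (hΦ4 : Measurable Φ4)
    (h1 : Measurable u1) (h2 : Measurable u2) (h3 : Measurable u3) (h4 : Measurable u4)
    (hΦ4fin : ∫⁻ t, Φ4 t ≠ ∞) (hS1 : S u1 ≠ ∞) (hS4 : S u4 ≠ ∞) :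
    ∫⁻ x1, u1 x1 * ∫⁻ x2, u2 x2 * ∫⁻ x3, u3 x3 * Φ1 (x2 + x3) *
        ∫⁻ x4, u4 x4 * Φ4 (x1 + x2 + x3 + x4)
      ≤ ((∫⁻ t, Φ1 t) * (S u2 * S u3)) * ((∫⁻ t, Φ4 t) * (S u1 * S u4)) := by
  set K : ℝ≥0∞ := (∫⁻ t, Φ4 t) * (S u1 * S u4) with hK
  have hKne : K ≠ ∞ := by
    rw [hK]
    exact ENNReal.mul_ne_top hΦ4fin (ENNReal.mul_ne_top hS1 hS4)
  set J : ℝ → ℝ≥0∞ := fun t => ∫⁻ x4, u4 x4 * Φ4 (t + x4) with hJdef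
  have hJm : Measurable J := by
    apply Measurable.lintegral_prod_right' (f := fun p : ℝ × ℝ => u4 p.2 * Φ4 (p.1 + p.2))
    exact (h4.comp measurable_snd).mul (hΦ4.comp (measurable_fst.add measurable_snd))
  have hJb : ∀ c : ℝ, ∫⁻ x1, u1 x1 * J (x1 + c) ≤ K := by
    intro c
    have hb := bilin (fun t => Φ4 (t + c)) u1 u4 (hΦ4.comp (measurable_add_const c)) h1 h4
    rw [lintegral_add_right_eq_self (μ := volume) (fun t => Φ4 t) c] at hb
    refine le_trans (le_of_eq ?_) hb
    refine lintegral_congr fun x1 => ?_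
    congr 1
    refine lintegral_congr fun x4 => ?_
    congr 2
    ring
  -- the inner (x3, x4) expression as a function of (x1, x2)
  set F : ℝ → ℝ → ℝ≥0∞ :=
    fun x1 x2 => ∫⁻ x3, u3 x3 * Φ1 (x2 + x3) * J (x1 + x2 + x3) with hFdef
  have hFm : Measurable (uncurry F) := by
    apply Measurable.lintegral_prod_right'
      (f := fun p : (ℝ × ℝ) × ℝ => u3 p.2 * Φ1 (p.1.2 + p.2) * J (p.1.1 + p.1.2 + p.2))
    exact ((h3.comp measurable_snd).mul
      (hΦ1.comp ((measurable_fst.snd).add measurable_snd))).mul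
      (hJm.comp (((measurable_fst.fst).add (measurable_fst.snd)).add measurable_snd))
  have hinner : ∀ x2 : ℝ, ∫⁻ x1, u1 x1 * F x1 x2 ≤ (∫⁻ x3, u3 x3 * Φ1 (x2 + x3)) * K := by
    intro x2
    have hswap : ∫⁻ x1, u1 x1 * F x1 x2
        = ∫⁻ x3, (u3 x3 * Φ1 (x2 + x3)) * ∫⁻ x1, u1 x1 * J (x1 + (x2 + x3)) := by
      calc ∫⁻ x1, u1 x1 * F x1 x2
          = ∫⁻ x1, ∫⁻ x3, u1 x1 * (u3 x3 * Φ1 (x2 + x3) * J (x1 + x2 + x3)) := by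
            refine lintegral_congr fun x1 => ?_
            rw [hFdef]
            exact (lintegral_const_mul (u1 x1)
              (f := fun x3 => u3 x3 * Φ1 (x2 + x3) * J (x1 + x2 + x3)) (by fun_prop)).symm
        _ = ∫⁻ x3, ∫⁻ x1, u1 x1 * (u3 x3 * Φ1 (x2 + x3) * J (x1 + x2 + x3)) := by
            refine lintegral_lintegral_swap ?_
            refine Measurable.aemeasurable ?_
            exact (h1.comp measurable_fst).mul
              (((h3.comp measurable_snd).mul
                (hΦ1.comp (measurable_const.add measurable_snd))).mul
                (hJm.comp ((measurable_fst.add measurable_const).add measurable_snd)))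
        _ = ∫⁻ x3, (u3 x3 * Φ1 (x2 + x3)) * ∫⁻ x1, u1 x1 * J (x1 + (x2 + x3)) := by
            refine lintegral_congr fun x3 => ?_
            rw [← lintegral_const_mul (u3 x3 * Φ1 (x2 + x3))
              (f := fun x1 => u1 x1 * J (x1 + (x2 + x3))) (by fun_prop)]
            refine lintegral_congr fun x1 => ?_
            have hx : x1 + x2 + x3 = x1 + (x2 + x3) := by ring
            rw [hx]; ring
    rw [hswap]
    calc ∫⁻ x3, (u3 x3 * Φ1 (x2 + x3)) * ∫⁻ x1, u1 x1 * J (x1 + (x2 + x3))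
        ≤ ∫⁻ x3, (u3 x3 * Φ1 (x2 + x3)) * K :=
          lintegral_mono fun x3 => mul_le_mul_right (hJb (x2 + x3)) _
      _ = (∫⁻ x3, u3 x3 * Φ1 (x2 + x3)) * K :=
          lintegral_mul_const' K _ hKne
  calc ∫⁻ x1, u1 x1 * ∫⁻ x2, u2 x2 * ∫⁻ x3, u3 x3 * Φ1 (x2 + x3) *
          ∫⁻ x4, u4 x4 * Φ4 (x1 + x2 + x3 + x4)
      = ∫⁻ x1, ∫⁻ x2, u1 x1 * (u2 x2 * F x1 x2) := by
        refine lintegral_congr fun x1 => ?_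
        exact (lintegral_const_mul (u1 x1)
          (f := fun x2 => u2 x2 * F x1 x2)
          (h2.mul (hFm.comp (measurable_const.prodMk measurable_id)))).symm
    _ = ∫⁻ x2, ∫⁻ x1, u1 x1 * (u2 x2 * F x1 x2) := by
        refine lintegral_lintegral_swap ?_
        refine Measurable.aemeasurable ?_
        exact (h1.comp measurable_fst).mul ((h2.comp measurable_snd).mul hFm)
    _ = ∫⁻ x2, u2 x2 * ∫⁻ x1, u1 x1 * F x1 x2 := by
        refine lintegral_congr fun x2 => ?_
        rw [← lintegral_const_mul (u2 x2) (f := fun x1 => u1 x1 * F x1 x2)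
          (h1.mul (hFm.comp (measurable_id.prodMk measurable_const)))]
        exact lintegral_congr fun x1 => by ring
    _ ≤ ∫⁻ x2, u2 x2 * ((∫⁻ x3, u3 x3 * Φ1 (x2 + x3)) * K) :=
        lintegral_mono fun x2 => mul_le_mul_right (hinner x2) _
    _ = ∫⁻ x2, (u2 x2 * ∫⁻ x3, u3 x3 * Φ1 (x2 + x3)) * K := by
        refine lintegral_congr fun x2 => ?_; ring
    _ = (∫⁻ x2, u2 x2 * ∫⁻ x3, u3 x3 * Φ1 (x2 + x3)) * K :=
        lintegral_mul_const' K _ hKne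
    _ ≤ ((∫⁻ t, Φ1 t) * (S u2 * S u3)) * K :=
        mul_le_mul_left (bilin Φ1 u2 u3 hΦ1 h2 h3) K



end SixLinearAux

open SixLinearAux in
theorem sixlinear_convolution_estimate :
    ∃ C > 0, ∀ (M1 M4 : ℝ), 0 < M1 → 0 < M4 →
      ∀ (φM1 φM4 : ℝ → ℝ),
      (∀ ξ, 0 ≤ φM1 ξ ∧ φM1 ξ ≤ 1) →
      (∀ ξ, φM1 ξ ≠ 0 → M1 / 2 ≤ |ξ| ∧ |ξ| ≤ 2 * M1) →
      (∀ ξ, 0 ≤ φM4 ξ ∧ φM4 ξ ≤ 1) →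
      (∀ ξ, φM4 ξ ≠ 0 → M4 / 2 ≤ |ξ| ∧ |ξ| ≤ 2 * M4) →
      ∀ (f1 f2 f3 f4 f5 f6 : ℝ → ℂ),
        MemLp f1 2 volume → MemLp f2 2 volume → MemLp f3 2 volume →
        MemLp f4 2 volume → MemLp f5 2 volume → MemLp f6 2 volume →
        (∫ ξ1 : ℝ, ∫ ξ2 : ℝ, ∫ ξ3 : ℝ, ∫ ξ4 : ℝ, ∫ ξ5 : ℝ,
            φM1 (ξ2 + ξ3) * φM4 (ξ5 + (-(ξ1 + ξ2 + ξ3 + ξ4 + ξ5))) *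
              (‖f1 ξ1‖ * ‖f2 ξ2‖ * ‖f3 ξ3‖ * ‖f4 ξ4‖ * ‖f5 ξ5‖ *
                ‖f6 (-(ξ1 + ξ2 + ξ3 + ξ4 + ξ5))‖)) ≤
          C * M1 * M4 *
            ((eLpNorm f1 2 volume).toReal * (eLpNorm f2 2 volume).toReal *
              (eLpNorm f3 2 volume).toReal * (eLpNorm f4 2 volume).toReal *
              (eLpNorm f5 2 volume).toReal * (eLpNorm f6 2 volume).toReal) := by
  classical
  refine ⟨16, by norm_num, ?_⟩
  intro M1 M4 hM1 hM4 φM1 φM4 hb1 hs1 hb4 hs4 f1 f2 f3 f4 f5 f6 hf1 hf2 hf3 hf4 hf5 hf6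
  -- measurable ℝ≥0∞-valued versions of the norms
  set g1 : ℝ → ℝ≥0∞ := fun x => (‖hf1.1.mk f1 x‖₊ : ℝ≥0∞) with hg1def
  set g2 : ℝ → ℝ≥0∞ := fun x => (‖hf2.1.mk f2 x‖₊ : ℝ≥0∞) with hg2def
  set g3 : ℝ → ℝ≥0∞ := fun x => (‖hf3.1.mk f3 x‖₊ : ℝ≥0∞) with hg3def
  set g4 : ℝ → ℝ≥0∞ := fun x => (‖hf4.1.mk f4 x‖₊ : ℝ≥0∞) with hg4def
  set g5 : ℝ → ℝ≥0∞ := fun x => (‖hf5.1.mk f5 x‖₊ : ℝ≥0∞) with hg5def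
  set g6 : ℝ → ℝ≥0∞ := fun x => (‖hf6.1.mk f6 x‖₊ : ℝ≥0∞) with hg6def
  have hg1 : Measurable g1 := hf1.1.stronglyMeasurable_mk.measurable.nnnorm.coe_nnreal_ennreal
  have hg2 : Measurable g2 := hf2.1.stronglyMeasurable_mk.measurable.nnnorm.coe_nnreal_ennreal
  have hg3 : Measurable g3 := hf3.1.stronglyMeasurable_mk.measurable.nnnorm.coe_nnreal_ennreal
  have hg4 : Measurable g4 := hf4.1.stronglyMeasurable_mk.measurable.nnnorm.coe_nnreal_ennreal
  have hg5 : Measurable g5 := hf5.1.stronglyMeasurable_mk.measurable.nnnorm.coe_nnreal_ennreal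
  have hg6 : Measurable g6 := hf6.1.stronglyMeasurable_mk.measurable.nnnorm.coe_nnreal_ennreal
  have he1 : (fun x => ((‖f1 x‖₊ : ℝ≥0∞))) =ᵐ[volume] g1 := by
    filter_upwards [hf1.1.ae_eq_mk] with x hx; rw [hg1def]; simp only [hx]
  have he2 : (fun x => ((‖f2 x‖₊ : ℝ≥0∞))) =ᵐ[volume] g2 := by
    filter_upwards [hf2.1.ae_eq_mk] with x hx; rw [hg2def]; simp only [hx]
  have he3 : (fun x => ((‖f3 x‖₊ : ℝ≥0∞))) =ᵐ[volume] g3 := by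
    filter_upwards [hf3.1.ae_eq_mk] with x hx; rw [hg3def]; simp only [hx]
  have he4 : (fun x => ((‖f4 x‖₊ : ℝ≥0∞))) =ᵐ[volume] g4 := by
    filter_upwards [hf4.1.ae_eq_mk] with x hx; rw [hg4def]; simp only [hx]
  have he5 : (fun x => ((‖f5 x‖₊ : ℝ≥0∞))) =ᵐ[volume] g5 := by
    filter_upwards [hf5.1.ae_eq_mk] with x hx; rw [hg5def]; simp only [hx]
  have he6 : (fun x => ((‖f6 x‖₊ : ℝ≥0∞))) =ᵐ[volume] g6 := by
    filter_upwards [hf6.1.ae_eq_mk] with x hx; rw [hg6def]; simp only [hx]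
  have hStwo : ∀ (f : ℝ → ℂ) (g : ℝ → ℝ≥0∞),
      (fun x => ((‖f x‖₊ : ℝ≥0∞))) =ᵐ[volume] g → S g = eLpNorm f 2 volume := by
    intro f g he
    rw [eLpNorm_eq_lintegral_rpow_enorm_toReal (by norm_num) (by norm_num)]
    simp only [ENNReal.toReal_ofNat, S, enorm_eq_nnnorm]
    congr 1
    refine lintegral_congr_ae ?_
    filter_upwards [he] with x hx; rw [hx]
  have hSg1 : S g1 = eLpNorm f1 2 volume := hStwo f1 g1 he1
  have hSg2 : S g2 = eLpNorm f2 2 volume := hStwo f2 g2 he2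
  have hSg3 : S g3 = eLpNorm f3 2 volume := hStwo f3 g3 he3
  have hSg4 : S g4 = eLpNorm f4 2 volume := hStwo f4 g4 he4
  have hSg5 : S g5 = eLpNorm f5 2 volume := hStwo f5 g5 he5
  have hSg6 : S g6 = eLpNorm f6 2 volume := hStwo f6 g6 he6
  have hN1 : eLpNorm f1 2 volume ≠ ∞ := hf1.2.ne
  have hN2 : eLpNorm f2 2 volume ≠ ∞ := hf2.2.ne
  have hN3 : eLpNorm f3 2 volume ≠ ∞ := hf3.2.ne
  have hN4 : eLpNorm f4 2 volume ≠ ∞ := hf4.2.ne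
  have hN5 : eLpNorm f5 2 volume ≠ ∞ := hf5.2.ne
  have hN6 : eLpNorm f6 2 volume ≠ ∞ := hf6.2.ne
  -- indicator majorants of the bumps
  set Ψ1 : ℝ → ℝ≥0∞ := (Set.Icc (-(2*M1)) (2*M1)).indicator (fun _ => (1:ℝ≥0∞)) with hΨ1def
  set Ψ4 : ℝ → ℝ≥0∞ := (Set.Icc (-(2*M4)) (2*M4)).indicator (fun _ => (1:ℝ≥0∞)) with hΨ4def
  have hΨ1m : Measurable Ψ1 := measurable_const.indicator measurableSet_Icc
  have hΨ4m : Measurable Ψ4 := measurable_const.indicator measurableSet_Icc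
  have hΨ1fin : ∀ x, Ψ1 x ≠ ∞ := by
    intro x; rw [hΨ1def]
    by_cases hx : x ∈ Set.Icc (-(2*M1)) (2*M1) <;> simp [hx]
  have hΨ4fin : ∀ x, Ψ4 x ≠ ∞ := by
    intro x; rw [hΨ4def]
    by_cases hx : x ∈ Set.Icc (-(2*M4)) (2*M4) <;> simp [hx]
  have hΨ1le : ∀ x : ℝ, ENNReal.ofReal (φM1 x) ≤ Ψ1 x := by
    intro x
    by_cases h : φM1 x = 0
    · simp [h]
    · have hx2 := (hs1 x h).2
      obtain ⟨hl, hr⟩ := abs_le.mp hx2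
      have hmem : x ∈ Set.Icc (-(2*M1)) (2*M1) := ⟨by linarith, hr⟩
      rw [hΨ1def, Set.indicator_of_mem hmem]
      exact ENNReal.ofReal_le_one.mpr (hb1 x).2
  have hΨ4le : ∀ x : ℝ, ENNReal.ofReal (φM4 x) ≤ Ψ4 x := by
    intro x
    by_cases h : φM4 x = 0
    · simp [h]
    · have hx2 := (hs4 x h).2
      obtain ⟨hl, hr⟩ := abs_le.mp hx2
      have hmem : x ∈ Set.Icc (-(2*M4)) (2*M4) := ⟨by linarith, hr⟩
      rw [hΨ4def, Set.indicator_of_mem hmem]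
      exact ENNReal.ofReal_le_one.mpr (hb4 x).2
  have hΨ1int : ∫⁻ t, Ψ1 t = ENNReal.ofReal (4*M1) := by
    rw [hΨ1def, lintegral_indicator_const measurableSet_Icc, Real.volume_Icc, one_mul]
    congr 1; ring
  have hΨ4int : ∫⁻ t, Ψ4 t = ENNReal.ofReal (4*M4) := by
    rw [hΨ4def, lintegral_indicator_const measurableSet_Icc, Real.volume_Icc, one_mul]
    congr 1; ring
  -- pointwise domination of the integrand
  have hpt : ∀ ξ1 ξ2 ξ3 ξ4 ξ5 : ℝ,
      ENNReal.ofReal (φM1 (ξ2 + ξ3) * φM4 (ξ5 + (-(ξ1 + ξ2 + ξ3 + ξ4 + ξ5))) *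
        (‖f1 ξ1‖ * ‖f2 ξ2‖ * ‖f3 ξ3‖ * ‖f4 ξ4‖ * ‖f5 ξ5‖ *
          ‖f6 (-(ξ1 + ξ2 + ξ3 + ξ4 + ξ5))‖))
      ≤ (Ψ1 (ξ2+ξ3) * Ψ4 (-(ξ1+ξ2+ξ3+ξ4)) *
          ((‖f1 ξ1‖₊ : ℝ≥0∞) * (‖f2 ξ2‖₊ : ℝ≥0∞) * (‖f3 ξ3‖₊ : ℝ≥0∞) * (‖f4 ξ4‖₊ : ℝ≥0∞))) *
        ((‖f5 ξ5‖₊ : ℝ≥0∞) * (‖f6 (-(ξ1+ξ2+ξ3+ξ4) - ξ5)‖₊ : ℝ≥0∞)) := by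
    intro ξ1 ξ2 ξ3 ξ4 ξ5
    have e1 : ξ5 + (-(ξ1+ξ2+ξ3+ξ4+ξ5)) = -(ξ1+ξ2+ξ3+ξ4) := by ring
    have e2 : -(ξ1+ξ2+ξ3+ξ4+ξ5) = -(ξ1+ξ2+ξ3+ξ4) - ξ5 := by ring
    rw [e1, e2]
    have h1 := (hb1 (ξ2+ξ3)).1
    have h4 := (hb4 (-(ξ1+ξ2+ξ3+ξ4))).1
    have hP : ENNReal.ofReal (‖f1 ξ1‖ * ‖f2 ξ2‖ * ‖f3 ξ3‖ * ‖f4 ξ4‖ * ‖f5 ξ5‖ *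
          ‖f6 (-(ξ1+ξ2+ξ3+ξ4) - ξ5)‖)
        = (‖f1 ξ1‖₊ : ℝ≥0∞) * (‖f2 ξ2‖₊ : ℝ≥0∞) * (‖f3 ξ3‖₊ : ℝ≥0∞) * (‖f4 ξ4‖₊ : ℝ≥0∞) *
          (‖f5 ξ5‖₊ : ℝ≥0∞) * (‖f6 (-(ξ1+ξ2+ξ3+ξ4) - ξ5)‖₊ : ℝ≥0∞) := by
      rw [ENNReal.ofReal_mul (by positivity), ENNReal.ofReal_mul (by positivity),
        ENNReal.ofReal_mul (by positivity), ENNReal.ofReal_mul (by positivity),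
        ENNReal.ofReal_mul (norm_nonneg _)]
      simp only [ofReal_norm, enorm_eq_nnnorm]
    rw [ENNReal.ofReal_mul (mul_nonneg h1 h4), ENNReal.ofReal_mul h1, hP]
    refine le_trans (mul_le_mul'
      (mul_le_mul' (hΨ1le (ξ2+ξ3)) (hΨ4le (-(ξ1+ξ2+ξ3+ξ4)))) le_rfl) (le_of_eq (by ring))
  -- nonnegativity of the integrand and of the nested integrals
  have h0 : ∀ ξ1 ξ2 ξ3 ξ4 ξ5 : ℝ,
      0 ≤ φM1 (ξ2 + ξ3) * φM4 (ξ5 + (-(ξ1 + ξ2 + ξ3 + ξ4 + ξ5))) *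
        (‖f1 ξ1‖ * ‖f2 ξ2‖ * ‖f3 ξ3‖ * ‖f4 ξ4‖ * ‖f5 ξ5‖ *
          ‖f6 (-(ξ1 + ξ2 + ξ3 + ξ4 + ξ5))‖) := by
    intro ξ1 ξ2 ξ3 ξ4 ξ5
    have a1 := (hb1 (ξ2+ξ3)).1
    have a4 := (hb4 (ξ5 + (-(ξ1 + ξ2 + ξ3 + ξ4 + ξ5)))).1
    positivity
  -- Cauchy–Schwarz in the innermost variable
  have h5b : ∀ d : ℝ,
      ∫⁻ ξ5 : ℝ, ((‖f5 ξ5‖₊ : ℝ≥0∞) * (‖f6 (d - ξ5)‖₊ : ℝ≥0∞))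
        ≤ eLpNorm f5 2 volume * eLpNorm f6 2 volume := by
    intro d
    have he6d : (fun x : ℝ => ((‖f6 (d - x)‖₊ : ℝ≥0∞))) =ᵐ[volume] (fun x => g6 (d - x)) := by
      have h := (Measure.measurePreserving_sub_left volume d).quasiMeasurePreserving.ae_eq_comp
        (g := fun x => ((‖f6 x‖₊ : ℝ≥0∞))) (g' := g6) he6
      exact h
    calc ∫⁻ ξ5 : ℝ, ((‖f5 ξ5‖₊ : ℝ≥0∞) * (‖f6 (d - ξ5)‖₊ : ℝ≥0∞))
        = ∫⁻ ξ5, g5 ξ5 * g6 (d - ξ5) := by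
          refine lintegral_congr_ae ?_
          filter_upwards [he5, he6d] with x hx hx'
          rw [hx, hx']
      _ ≤ S g5 * S (fun x => g6 (d - x)) :=
          lcs hg5.aemeasurable (hg6.comp (measurable_const.sub measurable_id)).aemeasurable
      _ = S g5 * S g6 := by rw [S_sub g6 hg6 d]
      _ = eLpNorm f5 2 volume * eLpNorm f6 2 volume := by rw [hSg5, hSg6]
  set E : ℝ≥0∞ := eLpNorm f5 2 volume * eLpNorm f6 2 volume with hEdef
  have hEne : E ≠ ∞ := ENNReal.mul_ne_top hN5 hN6
  -- level 4 bound for the inner lintegral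
  have h4b : ∀ ξ1 ξ2 ξ3 ξ4 : ℝ,
      (∫⁻ ξ5 : ℝ, (Ψ1 (ξ2+ξ3) * Ψ4 (-(ξ1+ξ2+ξ3+ξ4)) *
          ((‖f1 ξ1‖₊ : ℝ≥0∞) * (‖f2 ξ2‖₊ : ℝ≥0∞) * (‖f3 ξ3‖₊ : ℝ≥0∞) * (‖f4 ξ4‖₊ : ℝ≥0∞))) *
        ((‖f5 ξ5‖₊ : ℝ≥0∞) * (‖f6 (-(ξ1+ξ2+ξ3+ξ4) - ξ5)‖₊ : ℝ≥0∞)))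
      ≤ (Ψ1 (ξ2+ξ3) * Ψ4 (-(ξ1+ξ2+ξ3+ξ4)) *
          ((‖f1 ξ1‖₊ : ℝ≥0∞) * (‖f2 ξ2‖₊ : ℝ≥0∞) * (‖f3 ξ3‖₊ : ℝ≥0∞) * (‖f4 ξ4‖₊ : ℝ≥0∞))) * E := by
    intro ξ1 ξ2 ξ3 ξ4
    have hcne : Ψ1 (ξ2+ξ3) * Ψ4 (-(ξ1+ξ2+ξ3+ξ4)) *
        ((‖f1 ξ1‖₊ : ℝ≥0∞) * (‖f2 ξ2‖₊ : ℝ≥0∞) * (‖f3 ξ3‖₊ : ℝ≥0∞) * (‖f4 ξ4‖₊ : ℝ≥0∞)) ≠ ∞ := by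
      refine ENNReal.mul_ne_top (ENNReal.mul_ne_top (hΨ1fin _) (hΨ4fin _)) ?_
      exact ENNReal.mul_ne_top (ENNReal.mul_ne_top (ENNReal.mul_ne_top ENNReal.coe_ne_top
        ENNReal.coe_ne_top) ENNReal.coe_ne_top) ENNReal.coe_ne_top
    rw [lintegral_const_mul' _ _ hcne]
    exact mul_le_mul_right (h5b (-(ξ1+ξ2+ξ3+ξ4))) _
  -- the main ℝ≥0∞ estimate
  have main : ∫⁻ ξ1 : ℝ, ∫⁻ ξ2 : ℝ, ∫⁻ ξ3 : ℝ, ∫⁻ ξ4 : ℝ, ∫⁻ ξ5 : ℝ,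
        (Ψ1 (ξ2+ξ3) * Ψ4 (-(ξ1+ξ2+ξ3+ξ4)) *
          ((‖f1 ξ1‖₊ : ℝ≥0∞) * (‖f2 ξ2‖₊ : ℝ≥0∞) * (‖f3 ξ3‖₊ : ℝ≥0∞) * (‖f4 ξ4‖₊ : ℝ≥0∞))) *
        ((‖f5 ξ5‖₊ : ℝ≥0∞) * (‖f6 (-(ξ1+ξ2+ξ3+ξ4) - ξ5)‖₊ : ℝ≥0∞))
      ≤ ((ENNReal.ofReal (4*M1) * (eLpNorm f2 2 volume * eLpNorm f3 2 volume)) *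
          (ENNReal.ofReal (4*M4) * (eLpNorm f1 2 volume * eLpNorm f4 2 volume))) * E := by
    have step1 : ∫⁻ ξ1 : ℝ, ∫⁻ ξ2 : ℝ, ∫⁻ ξ3 : ℝ, ∫⁻ ξ4 : ℝ, ∫⁻ ξ5 : ℝ,
          (Ψ1 (ξ2+ξ3) * Ψ4 (-(ξ1+ξ2+ξ3+ξ4)) *
            ((‖f1 ξ1‖₊ : ℝ≥0∞) * (‖f2 ξ2‖₊ : ℝ≥0∞) * (‖f3 ξ3‖₊ : ℝ≥0∞) * (‖f4 ξ4‖₊ : ℝ≥0∞))) *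
          ((‖f5 ξ5‖₊ : ℝ≥0∞) * (‖f6 (-(ξ1+ξ2+ξ3+ξ4) - ξ5)‖₊ : ℝ≥0∞))
        ≤ (∫⁻ ξ1 : ℝ, ∫⁻ ξ2 : ℝ, ∫⁻ ξ3 : ℝ, ∫⁻ ξ4 : ℝ,
            (Ψ1 (ξ2+ξ3) * Ψ4 (-(ξ1+ξ2+ξ3+ξ4)) *
              ((‖f1 ξ1‖₊ : ℝ≥0∞) * (‖f2 ξ2‖₊ : ℝ≥0∞) * (‖f3 ξ3‖₊ : ℝ≥0∞) * (‖f4 ξ4‖₊ : ℝ≥0∞))) * E) :=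
      lintegral_mono fun ξ1 => lintegral_mono fun ξ2 => lintegral_mono fun ξ3 =>
        lintegral_mono fun ξ4 => h4b ξ1 ξ2 ξ3 ξ4
    refine le_trans step1 ?_
    -- pull the constant E out of the four integrals
    have pullE : ∫⁻ ξ1 : ℝ, ∫⁻ ξ2 : ℝ, ∫⁻ ξ3 : ℝ, ∫⁻ ξ4 : ℝ,
          (Ψ1 (ξ2+ξ3) * Ψ4 (-(ξ1+ξ2+ξ3+ξ4)) *
            ((‖f1 ξ1‖₊ : ℝ≥0∞) * (‖f2 ξ2‖₊ : ℝ≥0∞) * (‖f3 ξ3‖₊ : ℝ≥0∞) * (‖f4 ξ4‖₊ : ℝ≥0∞))) * E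
        = (∫⁻ ξ1 : ℝ, ∫⁻ ξ2 : ℝ, ∫⁻ ξ3 : ℝ, ∫⁻ ξ4 : ℝ,
            Ψ1 (ξ2+ξ3) * Ψ4 (-(ξ1+ξ2+ξ3+ξ4)) *
              ((‖f1 ξ1‖₊ : ℝ≥0∞) * (‖f2 ξ2‖₊ : ℝ≥0∞) * (‖f3 ξ3‖₊ : ℝ≥0∞) * (‖f4 ξ4‖₊ : ℝ≥0∞))) * E := by
      rw [← lintegral_mul_const' E _ hEne]
      refine lintegral_congr fun ξ1 => ?_
      rw [← lintegral_mul_const' E _ hEne]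
      refine lintegral_congr fun ξ2 => ?_
      rw [← lintegral_mul_const' E _ hEne]
      refine lintegral_congr fun ξ3 => ?_
      rw [← lintegral_mul_const' E _ hEne]
    rw [pullE]
    refine mul_le_mul_left ?_ E
    -- restructure into the `core` shape with measurable integrands
    have hstruct : ∫⁻ ξ1 : ℝ, ∫⁻ ξ2 : ℝ, ∫⁻ ξ3 : ℝ, ∫⁻ ξ4 : ℝ,
          Ψ1 (ξ2+ξ3) * Ψ4 (-(ξ1+ξ2+ξ3+ξ4)) *
            ((‖f1 ξ1‖₊ : ℝ≥0∞) * (‖f2 ξ2‖₊ : ℝ≥0∞) * (‖f3 ξ3‖₊ : ℝ≥0∞) * (‖f4 ξ4‖₊ : ℝ≥0∞))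
        = ∫⁻ x1, g1 x1 * ∫⁻ x2, g2 x2 * ∫⁻ x3, g3 x3 * Ψ1 (x2 + x3) *
            ∫⁻ x4, g4 x4 * (fun t => Ψ4 (-t)) (x1 + x2 + x3 + x4) := by
      have s4 : ∀ ξ1 ξ2 ξ3 : ℝ,
          ∫⁻ ξ4 : ℝ, Ψ1 (ξ2+ξ3) * Ψ4 (-(ξ1+ξ2+ξ3+ξ4)) *
              ((‖f1 ξ1‖₊ : ℝ≥0∞) * (‖f2 ξ2‖₊ : ℝ≥0∞) * (‖f3 ξ3‖₊ : ℝ≥0∞) * (‖f4 ξ4‖₊ : ℝ≥0∞))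
          = ((‖f1 ξ1‖₊ : ℝ≥0∞) * ((‖f2 ξ2‖₊ : ℝ≥0∞) * ((‖f3 ξ3‖₊ : ℝ≥0∞) * Ψ1 (ξ2+ξ3)))) *
              ∫⁻ ξ4, g4 ξ4 * (fun t => Ψ4 (-t)) (ξ1 + ξ2 + ξ3 + ξ4) := by
        intro ξ1 ξ2 ξ3
        rw [← lintegral_const_mul'
          ((‖f1 ξ1‖₊ : ℝ≥0∞) * ((‖f2 ξ2‖₊ : ℝ≥0∞) * ((‖f3 ξ3‖₊ : ℝ≥0∞) * Ψ1 (ξ2+ξ3)))) _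
          (ENNReal.mul_ne_top ENNReal.coe_ne_top (ENNReal.mul_ne_top ENNReal.coe_ne_top
            (ENNReal.mul_ne_top ENNReal.coe_ne_top (hΨ1fin _))))]
        refine lintegral_congr_ae ?_
        filter_upwards [he4] with x hx
        rw [← hx]
        ring
      have s3 : ∀ ξ1 ξ2 : ℝ,
          ∫⁻ ξ3 : ℝ, ((‖f1 ξ1‖₊ : ℝ≥0∞) * ((‖f2 ξ2‖₊ : ℝ≥0∞) * ((‖f3 ξ3‖₊ : ℝ≥0∞) * Ψ1 (ξ2+ξ3)))) *
              ∫⁻ ξ4, g4 ξ4 * (fun t => Ψ4 (-t)) (ξ1 + ξ2 + ξ3 + ξ4)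
          = ((‖f1 ξ1‖₊ : ℝ≥0∞) * (‖f2 ξ2‖₊ : ℝ≥0∞)) *
              ∫⁻ x3, g3 x3 * Ψ1 (ξ2 + x3) * ∫⁻ x4, g4 x4 * (fun t => Ψ4 (-t)) (ξ1 + ξ2 + x3 + x4) := by
        intro ξ1 ξ2
        rw [← lintegral_const_mul' ((‖f1 ξ1‖₊ : ℝ≥0∞) * (‖f2 ξ2‖₊ : ℝ≥0∞)) _
          (ENNReal.mul_ne_top ENNReal.coe_ne_top ENNReal.coe_ne_top)]
        refine lintegral_congr_ae ?_
        filter_upwards [he3] with x hx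
        rw [← hx]
        ring
      have s2 : ∀ ξ1 : ℝ,
          ∫⁻ ξ2 : ℝ, ((‖f1 ξ1‖₊ : ℝ≥0∞) * (‖f2 ξ2‖₊ : ℝ≥0∞)) *
              ∫⁻ x3, g3 x3 * Ψ1 (ξ2 + x3) * ∫⁻ x4, g4 x4 * (fun t => Ψ4 (-t)) (ξ1 + ξ2 + x3 + x4)
          = (‖f1 ξ1‖₊ : ℝ≥0∞) *
              ∫⁻ x2, g2 x2 * ∫⁻ x3, g3 x3 * Ψ1 (x2 + x3) *
                ∫⁻ x4, g4 x4 * (fun t => Ψ4 (-t)) (ξ1 + x2 + x3 + x4) := by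
        intro ξ1
        rw [← lintegral_const_mul' ((‖f1 ξ1‖₊ : ℝ≥0∞)) _ ENNReal.coe_ne_top]
        refine lintegral_congr_ae ?_
        filter_upwards [he2] with x hx
        rw [← hx]
        ring
      calc ∫⁻ ξ1 : ℝ, ∫⁻ ξ2 : ℝ, ∫⁻ ξ3 : ℝ, ∫⁻ ξ4 : ℝ,
            Ψ1 (ξ2+ξ3) * Ψ4 (-(ξ1+ξ2+ξ3+ξ4)) *
              ((‖f1 ξ1‖₊ : ℝ≥0∞) * (‖f2 ξ2‖₊ : ℝ≥0∞) * (‖f3 ξ3‖₊ : ℝ≥0∞) * (‖f4 ξ4‖₊ : ℝ≥0∞))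
          = ∫⁻ ξ1 : ℝ, (‖f1 ξ1‖₊ : ℝ≥0∞) *
              ∫⁻ x2, g2 x2 * ∫⁻ x3, g3 x3 * Ψ1 (x2 + x3) *
                ∫⁻ x4, g4 x4 * (fun t => Ψ4 (-t)) (ξ1 + x2 + x3 + x4) := by
            refine lintegral_congr fun ξ1 => ?_
            rw [← s2 ξ1]
            refine lintegral_congr fun ξ2 => ?_
            rw [← s3 ξ1 ξ2]
            refine lintegral_congr fun ξ3 => ?_
            exact s4 ξ1 ξ2 ξ3
        _ = ∫⁻ x1, g1 x1 * ∫⁻ x2, g2 x2 * ∫⁻ x3, g3 x3 * Ψ1 (x2 + x3) *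
              ∫⁻ x4, g4 x4 * (fun t => Ψ4 (-t)) (x1 + x2 + x3 + x4) := by
            refine lintegral_congr_ae ?_
            filter_upwards [he1] with x hx
            rw [hx]
    rw [hstruct]
    have hcore := core Ψ1 (fun t => Ψ4 (-t)) g1 g2 g3 g4 hΨ1m (hΨ4m.comp measurable_neg)
      hg1 hg2 hg3 hg4 ?_ ?_ ?_
    · refine le_trans hcore (le_of_eq ?_)
      have hnegint : ∫⁻ t : ℝ, Ψ4 (-t) = ∫⁻ t, Ψ4 t :=
        (Measure.measurePreserving_neg volume).lintegral_comp hΨ4m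
      rw [hΨ1int, hnegint, hΨ4int, hSg1, hSg2, hSg3, hSg4]
    · have hnegint : ∫⁻ t : ℝ, Ψ4 (-t) = ∫⁻ t, Ψ4 t :=
        (Measure.measurePreserving_neg volume).lintegral_comp hΨ4m
      rw [hnegint, hΨ4int]
      exact ENNReal.ofReal_ne_top
    · rw [hSg1]; exact hN1
    · rw [hSg4]; exact hN4
  -- descend from the Bochner iterated integral to the lintegral bound
  have descent : ENNReal.ofReal (∫ ξ1 : ℝ, ∫ ξ2 : ℝ, ∫ ξ3 : ℝ, ∫ ξ4 : ℝ, ∫ ξ5 : ℝ,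
        φM1 (ξ2 + ξ3) * φM4 (ξ5 + (-(ξ1 + ξ2 + ξ3 + ξ4 + ξ5))) *
          (‖f1 ξ1‖ * ‖f2 ξ2‖ * ‖f3 ξ3‖ * ‖f4 ξ4‖ * ‖f5 ξ5‖ *
            ‖f6 (-(ξ1 + ξ2 + ξ3 + ξ4 + ξ5))‖))
      ≤ ∫⁻ ξ1 : ℝ, ∫⁻ ξ2 : ℝ, ∫⁻ ξ3 : ℝ, ∫⁻ ξ4 : ℝ, ∫⁻ ξ5 : ℝ,
        (Ψ1 (ξ2+ξ3) * Ψ4 (-(ξ1+ξ2+ξ3+ξ4)) *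
          ((‖f1 ξ1‖₊ : ℝ≥0∞) * (‖f2 ξ2‖₊ : ℝ≥0∞) * (‖f3 ξ3‖₊ : ℝ≥0∞) * (‖f4 ξ4‖₊ : ℝ≥0∞))) *
        ((‖f5 ξ5‖₊ : ℝ≥0∞) * (‖f6 (-(ξ1+ξ2+ξ3+ξ4) - ξ5)‖₊ : ℝ≥0∞)) := by
    refine le_trans (ofReal_int_le _ (fun ξ1 => integral_nonneg fun ξ2 => integral_nonneg
      fun ξ3 => integral_nonneg fun ξ4 => integral_nonneg fun ξ5 => h0 ξ1 ξ2 ξ3 ξ4 ξ5))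
      (lintegral_mono fun ξ1 => ?_)
    refine le_trans (ofReal_int_le _ (fun ξ2 => integral_nonneg
      fun ξ3 => integral_nonneg fun ξ4 => integral_nonneg fun ξ5 => h0 ξ1 ξ2 ξ3 ξ4 ξ5))
      (lintegral_mono fun ξ2 => ?_)
    refine le_trans (ofReal_int_le _ (fun ξ3 => integral_nonneg
      fun ξ4 => integral_nonneg fun ξ5 => h0 ξ1 ξ2 ξ3 ξ4 ξ5))
      (lintegral_mono fun ξ3 => ?_)
    refine le_trans (ofReal_int_le _ (fun ξ4 => integral_nonneg fun ξ5 => h0 ξ1 ξ2 ξ3 ξ4 ξ5))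
      (lintegral_mono fun ξ4 => ?_)
    refine le_trans (ofReal_int_le _ (fun ξ5 => h0 ξ1 ξ2 ξ3 ξ4 ξ5))
      (lintegral_mono fun ξ5 => hpt ξ1 ξ2 ξ3 ξ4 ξ5)
  -- put everything together
  have hYne : ((ENNReal.ofReal (4*M1) * (eLpNorm f2 2 volume * eLpNorm f3 2 volume)) *
      (ENNReal.ofReal (4*M4) * (eLpNorm f1 2 volume * eLpNorm f4 2 volume))) * E ≠ ∞ := by
    refine ENNReal.mul_ne_top (ENNReal.mul_ne_top ?_ ?_) hEne
    · exact ENNReal.mul_ne_top ENNReal.ofReal_ne_top (ENNReal.mul_ne_top hN2 hN3)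
    · exact ENNReal.mul_ne_top ENNReal.ofReal_ne_top (ENNReal.mul_ne_top hN1 hN4)
  have hLHS0 : 0 ≤ ∫ ξ1 : ℝ, ∫ ξ2 : ℝ, ∫ ξ3 : ℝ, ∫ ξ4 : ℝ, ∫ ξ5 : ℝ,
      φM1 (ξ2 + ξ3) * φM4 (ξ5 + (-(ξ1 + ξ2 + ξ3 + ξ4 + ξ5))) *
        (‖f1 ξ1‖ * ‖f2 ξ2‖ * ‖f3 ξ3‖ * ‖f4 ξ4‖ * ‖f5 ξ5‖ *
          ‖f6 (-(ξ1 + ξ2 + ξ3 + ξ4 + ξ5))‖) :=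
    integral_nonneg fun ξ1 => integral_nonneg fun ξ2 => integral_nonneg
      fun ξ3 => integral_nonneg fun ξ4 => integral_nonneg fun ξ5 => h0 ξ1 ξ2 ξ3 ξ4 ξ5
  calc (∫ ξ1 : ℝ, ∫ ξ2 : ℝ, ∫ ξ3 : ℝ, ∫ ξ4 : ℝ, ∫ ξ5 : ℝ,
        φM1 (ξ2 + ξ3) * φM4 (ξ5 + (-(ξ1 + ξ2 + ξ3 + ξ4 + ξ5))) *
          (‖f1 ξ1‖ * ‖f2 ξ2‖ * ‖f3 ξ3‖ * ‖f4 ξ4‖ * ‖f5 ξ5‖ *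
            ‖f6 (-(ξ1 + ξ2 + ξ3 + ξ4 + ξ5))‖))
      = (ENNReal.ofReal (∫ ξ1 : ℝ, ∫ ξ2 : ℝ, ∫ ξ3 : ℝ, ∫ ξ4 : ℝ, ∫ ξ5 : ℝ,
          φM1 (ξ2 + ξ3) * φM4 (ξ5 + (-(ξ1 + ξ2 + ξ3 + ξ4 + ξ5))) *
            (‖f1 ξ1‖ * ‖f2 ξ2‖ * ‖f3 ξ3‖ * ‖f4 ξ4‖ * ‖f5 ξ5‖ *
              ‖f6 (-(ξ1 + ξ2 + ξ3 + ξ4 + ξ5))‖))).toReal := (ENNReal.toReal_ofReal hLHS0).symm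
    _ ≤ (((ENNReal.ofReal (4*M1) * (eLpNorm f2 2 volume * eLpNorm f3 2 volume)) *
          (ENNReal.ofReal (4*M4) * (eLpNorm f1 2 volume * eLpNorm f4 2 volume))) * E).toReal :=
        ENNReal.toReal_mono hYne (le_trans descent main)
    _ = 16 * M1 * M4 *
          ((eLpNorm f1 2 volume).toReal * (eLpNorm f2 2 volume).toReal *
            (eLpNorm f3 2 volume).toReal * (eLpNorm f4 2 volume).toReal *
            (eLpNorm f5 2 volume).toReal * (eLpNorm f6 2 volume).toReal) := by
        rw [hEdef]
        rw [ENNReal.toReal_mul, ENNReal.toReal_mul, ENNReal.toReal_mul, ENNReal.toReal_mul,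
          ENNReal.toReal_mul, ENNReal.toReal_mul, ENNReal.toReal_mul]
        rw [ENNReal.toReal_ofReal (by positivity : (0:ℝ) ≤ 4*M1),
          ENNReal.toReal_ofReal (by positivity : (0:ℝ) ≤ 4*M4)]
        ring
end

section
/- Let f1,...,f6 ∈ L²(ℝ) with supp f5 ⊂ {|ξ| ∼ N5} and supp f6 ⊂ {|ξ| ∼ N6} (annuli defined by N/2 ≤ |ξ| ≤ 2N). Let M1, M4 > 0 and φ_{M1}, φ_{M4} be bump functions adapted to annuli {|ξ| ∼ M1}, {|ξ| ∼ M4}. Then ∫_{ξ1+⋯+ξ6=0} φ_{M1}(ξ2+ξ3) φ_{M4}(ξ5+ξ6) ∏_{j=1}^{6} |f_j(ξ_j)| ≤ C · M1 · M4^{1/2} · N5^{1/4} N6^{1/4} ∏_{j=1}^{6} ‖f_j‖_{L²}. -/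
open MeasureTheory ENNReal Set Function

namespace SixLin


lemma halfhalf (x : ℝ≥0∞) : x ^ (1/2:ℝ) * x ^ (1/2:ℝ) = x := by
  rw [← ENNReal.rpow_add_of_nonneg _ _ (by norm_num) (by norm_num)]
  norm_num

lemma sq_half (x : ℝ≥0∞) : (x ^ (1/2:ℝ)) ^ (2:ℝ) = x := by
  rw [← ENNReal.rpow_mul]; norm_num

lemma lint_add_left (s : ℝ) {G : ℝ → ℝ≥0∞} (hG : Measurable G) :
    ∫⁻ x : ℝ, G (s + x) = ∫⁻ x, G x :=
  (measurePreserving_add_left (volume : Measure ℝ) s).lintegral_comp hG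

lemma cs2 {F G V : ℝ → ℝ≥0∞} (hF : Measurable F) (hG : Measurable G)
    (hV : Measurable V) (c : ℝ) :
    ∫⁻ x : ℝ, F x * ∫⁻ y : ℝ, G y * V (c + x + y) ≤
      (∫⁻ x, F x ^ (2:ℝ)) ^ (1/2:ℝ) * (∫⁻ x, G x ^ (2:ℝ)) ^ (1/2:ℝ) * ∫⁻ x, V x := by
  have haff : Measurable fun p : ℝ × ℝ => c + p.1 + p.2 :=
    ((measurable_const.add measurable_fst).add measurable_snd)
  have hVc : Measurable fun p : ℝ × ℝ => V (c + p.1 + p.2) := hV.comp haff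
  have hm1 : Measurable fun p : ℝ × ℝ => F p.1 * (G p.2 * V (c + p.1 + p.2)) :=
    (hF.comp measurable_fst).mul ((hG.comp measurable_snd).mul hVc)
  have hm2 : Measurable fun p : ℝ × ℝ => F p.1 * V (c + p.1 + p.2) ^ (1/2:ℝ) :=
    (hF.comp measurable_fst).mul (hVc.pow measurable_const)
  have hm3 : Measurable fun p : ℝ × ℝ => G p.2 * V (c + p.1 + p.2) ^ (1/2:ℝ) :=
    (hG.comp measurable_snd).mul (hVc.pow measurable_const)
  have hm4 : Measurable fun p : ℝ × ℝ => F p.1 ^ (2:ℝ) * V (c + p.1 + p.2) :=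
    ((hF.comp measurable_fst).pow measurable_const).mul hVc
  have hm5 : Measurable fun p : ℝ × ℝ => G p.2 ^ (2:ℝ) * V (c + p.1 + p.2) :=
    ((hG.comp measurable_snd).pow measurable_const).mul hVc
  -- step 1 : turn into product integral
  have h1 : ∀ x : ℝ, F x * ∫⁻ y : ℝ, G y * V (c + x + y)
      = ∫⁻ y : ℝ, F x * (G y * V (c + x + y)) := fun x =>
    (lintegral_const_mul (F x) ((hG.mul (hV.comp (measurable_const.add measurable_id))))).symm
  calc ∫⁻ x : ℝ, F x * ∫⁻ y : ℝ, G y * V (c + x + y)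
      = ∫⁻ x : ℝ, ∫⁻ y : ℝ, F x * (G y * V (c + x + y)) := by
        exact lintegral_congr h1
    _ = ∫⁻ p : ℝ × ℝ, F p.1 * (G p.2 * V (c + p.1 + p.2)) ∂(volume.prod volume) := by
        rw [MeasureTheory.lintegral_prod _ hm1.aemeasurable]
    _ = ∫⁻ p : ℝ × ℝ, ((fun p : ℝ × ℝ => F p.1 * V (c + p.1 + p.2) ^ (1/2:ℝ)) *
          (fun p : ℝ × ℝ => G p.2 * V (c + p.1 + p.2) ^ (1/2:ℝ))) p ∂(volume.prod volume) := by
        refine lintegral_congr fun p => ?_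
        simp only [Pi.mul_apply]
        rw [show F p.1 * V (c + p.1 + p.2) ^ (1/2:ℝ) * (G p.2 * V (c + p.1 + p.2) ^ (1/2:ℝ))
          = F p.1 * (G p.2 * (V (c + p.1 + p.2) ^ (1/2:ℝ) * V (c + p.1 + p.2) ^ (1/2:ℝ))) by ring]
        rw [halfhalf]
    _ ≤ (∫⁻ p : ℝ × ℝ, (F p.1 * V (c + p.1 + p.2) ^ (1/2:ℝ)) ^ (2:ℝ) ∂(volume.prod volume))
          ^ (1/2:ℝ) *
        (∫⁻ p : ℝ × ℝ, (G p.2 * V (c + p.1 + p.2) ^ (1/2:ℝ)) ^ (2:ℝ) ∂(volume.prod volume))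
          ^ (1/2:ℝ) := by
        exact ENNReal.lintegral_mul_le_Lp_mul_Lq (volume.prod volume) (p := 2) (q := 2)
          Real.HolderConjugate.two_two
          hm2.aemeasurable hm3.aemeasurable
    _ = (∫⁻ p : ℝ × ℝ, F p.1 ^ (2:ℝ) * V (c + p.1 + p.2) ∂(volume.prod volume)) ^ (1/2:ℝ) *
        (∫⁻ p : ℝ × ℝ, G p.2 ^ (2:ℝ) * V (c + p.1 + p.2) ∂(volume.prod volume)) ^ (1/2:ℝ) := by
        congr 1
        · congr 1; refine lintegral_congr fun p => ?_
          rw [ENNReal.mul_rpow_of_nonneg _ _ (by norm_num : (0:ℝ) ≤ 2), sq_half]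
        · congr 1; refine lintegral_congr fun p => ?_
          rw [ENNReal.mul_rpow_of_nonneg _ _ (by norm_num : (0:ℝ) ≤ 2), sq_half]
    _ = ((∫⁻ x, F x ^ (2:ℝ)) * ∫⁻ x, V x) ^ (1/2:ℝ) *
        ((∫⁻ x, G x ^ (2:ℝ)) * ∫⁻ x, V x) ^ (1/2:ℝ) := by
        congr 1
        · congr 1
          rw [MeasureTheory.lintegral_prod _ hm4.aemeasurable]
          calc ∫⁻ x : ℝ, ∫⁻ y : ℝ, F x ^ (2:ℝ) * V (c + x + y)
              = ∫⁻ x : ℝ, F x ^ (2:ℝ) * ∫⁻ y : ℝ, V (c + x + y) := by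
                refine lintegral_congr fun x => ?_
                exact lintegral_const_mul _ (hV.comp (measurable_const.add measurable_id))
            _ = ∫⁻ x : ℝ, F x ^ (2:ℝ) * ∫⁻ t, V t := by
                refine lintegral_congr fun x => ?_
                rw [lint_add_left (c + x) hV]
            _ = (∫⁻ x, F x ^ (2:ℝ)) * ∫⁻ x, V x :=
                lintegral_mul_const _ (hF.pow measurable_const)
        · congr 1
          rw [MeasureTheory.lintegral_prod_symm _ hm5.aemeasurable]
          calc ∫⁻ y : ℝ, ∫⁻ x : ℝ, G y ^ (2:ℝ) * V (c + x + y)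
              = ∫⁻ y : ℝ, G y ^ (2:ℝ) * ∫⁻ x : ℝ, V (c + x + y) := by
                refine lintegral_congr fun y => ?_
                refine lintegral_const_mul _ ?_
                exact hV.comp ((measurable_const.add measurable_id).add measurable_const)
            _ = ∫⁻ y : ℝ, G y ^ (2:ℝ) * ∫⁻ t, V t := by
                refine lintegral_congr fun y => ?_
                congr 1
                calc ∫⁻ x : ℝ, V (c + x + y) = ∫⁻ x : ℝ, V ((c + y) + x) := by
                      refine lintegral_congr fun x => ?_
                      congr 1; ring
                  _ = ∫⁻ t, V t := lint_add_left (c + y) hV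
            _ = (∫⁻ x, G x ^ (2:ℝ)) * ∫⁻ x, V x :=
                lintegral_mul_const _ (hG.pow measurable_const)
    _ = (∫⁻ x, F x ^ (2:ℝ)) ^ (1/2:ℝ) * (∫⁻ x, G x ^ (2:ℝ)) ^ (1/2:ℝ) * ∫⁻ x, V x := by
        rw [ENNReal.mul_rpow_of_nonneg _ _ (by norm_num : (0:ℝ) ≤ 1/2),
          ENNReal.mul_rpow_of_nonneg _ _ (by norm_num : (0:ℝ) ≤ 1/2)]
        rw [show ∀ a b c d : ℝ≥0∞, a * b * (c * d) = a * c * (b * d) by intros; ring]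
        rw [halfhalf]


lemma le_geom_mean {x a b : ℝ≥0∞} (ha : x ≤ a) (hb : x ≤ b) :
    x ≤ a ^ (1/2:ℝ) * b ^ (1/2:ℝ) := by
  calc x = x ^ (1/2:ℝ) * x ^ (1/2:ℝ) := (halfhalf x).symm
  _ ≤ a ^ (1/2:ℝ) * b ^ (1/2:ℝ) :=
      mul_le_mul' (ENNReal.rpow_le_rpow ha (by norm_num))
        (ENNReal.rpow_le_rpow hb (by norm_num))

lemma mp_neg_add (s : ℝ) : MeasurePreserving (fun x : ℝ => -(s + x)) volume volume := by
  have h1 := measurePreserving_add_left (volume : Measure ℝ) (-s)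
  have h2 := Measure.measurePreserving_neg (volume : Measure ℝ)
  have h3 := h1.comp h2
  have : ((fun x : ℝ => -s + x) ∘ fun x : ℝ => -x) = fun x : ℝ => -(s + x) := by
    funext x; simp only [Function.comp]; ring
  rwa [this] at h3

lemma lint_neg_add (s : ℝ) {G : ℝ → ℝ≥0∞} (hG : Measurable G) :
    ∫⁻ x : ℝ, G (-(s + x)) = ∫⁻ x, G x :=
  (mp_neg_add s).lintegral_comp hG

lemma cs1 {F G : ℝ → ℝ≥0∞} (hF : AEMeasurable F volume) (hG : AEMeasurable G volume) :
    ∫⁻ x, F x * G x ≤ (∫⁻ x, F x ^ (2:ℝ)) ^ (1/2:ℝ) * (∫⁻ x, G x ^ (2:ℝ)) ^ (1/2:ℝ) := by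
  have := ENNReal.lintegral_mul_le_Lp_mul_Lq volume (p := 2) (q := 2)
    Real.HolderConjugate.two_two hF hG
  simpa using this


lemma swap_after {F G : ℝ → ℝ≥0∞} {W : ℝ → ℝ → ℝ≥0∞} (hF : Measurable F) (hG : Measurable G)
    (hW : Measurable fun p : ℝ × ℝ => W p.1 p.2) :
    ∫⁻ x : ℝ, F x * ∫⁻ y : ℝ, G y * W x y = ∫⁻ y : ℝ, G y * ∫⁻ x : ℝ, F x * W x y := by
  have hmeas : Measurable fun p : ℝ × ℝ => F p.1 * (G p.2 * W p.1 p.2) :=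
    (hF.comp measurable_fst).mul ((hG.comp measurable_snd).mul hW)
  calc ∫⁻ x : ℝ, F x * ∫⁻ y : ℝ, G y * W x y
      = ∫⁻ x : ℝ, ∫⁻ y : ℝ, F x * (G y * W x y) := by
        refine lintegral_congr fun x => ?_
        exact (lintegral_const_mul _ (hG.mul (hW.comp measurable_prodMk_left))).symm
    _ = ∫⁻ y : ℝ, ∫⁻ x : ℝ, F x * (G y * W x y) := by
        exact lintegral_lintegral_swap hmeas.aemeasurable
    _ = ∫⁻ y : ℝ, G y * ∫⁻ x : ℝ, F x * W x y := by
        refine lintegral_congr fun y => ?_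
        have hx : Measurable fun x : ℝ => F x * W x y :=
          hF.mul (hW.comp measurable_prodMk_right)
        rw [← lintegral_const_mul _ hx]
        refine lintegral_congr fun x => ?_
        ring

lemma stage2 {F1 F2 F3 F4 F5 F6 χ1 χ4 : ℝ → ℝ≥0∞}
    (h1 : Measurable F1) (h2 : Measurable F2) (h3 : Measurable F3)
    (h4 : Measurable F4) (h5 : Measurable F5) (h6 : Measurable F6)
    (hχ1 : Measurable χ1) (hχ4 : Measurable χ4) (hχ4le : ∀ t, χ4 t ≤ 1) :
    (∫⁻ ξ1 : ℝ, F1 ξ1 * ∫⁻ ξ2 : ℝ, F2 ξ2 * ∫⁻ ξ3 : ℝ, F3 ξ3 *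
      (χ1 (ξ2 + ξ3) * ∫⁻ ξ4 : ℝ, F4 ξ4 * (χ4 (-(ξ1 + ξ2 + ξ3 + ξ4)) *
        ∫⁻ ξ5 : ℝ, F5 ξ5 * F6 (-(ξ1 + ξ2 + ξ3 + ξ4 + ξ5))))) ≤
    (∫⁻ t, χ1 t) *
      (((∫⁻ t, χ4 t) * ((∫⁻ x, F5 x ^ (2:ℝ)) ^ (1/2:ℝ) * (∫⁻ x, F6 x ^ (2:ℝ)) ^ (1/2:ℝ))) ^ (1/2:ℝ) *
        ((∫⁻ t, F5 t) * (∫⁻ t, F6 t)) ^ (1/2:ℝ)) *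
      ((∫⁻ x, F1 x ^ (2:ℝ)) ^ (1/2:ℝ) * (∫⁻ x, F2 x ^ (2:ℝ)) ^ (1/2:ℝ) *
       (∫⁻ x, F3 x ^ (2:ℝ)) ^ (1/2:ℝ) * (∫⁻ x, F4 x ^ (2:ℝ)) ^ (1/2:ℝ)) := by
  -- abbreviations
  set N1 := (∫⁻ x, F1 x ^ (2:ℝ)) ^ (1/2:ℝ) with hN1
  set N2 := (∫⁻ x, F2 x ^ (2:ℝ)) ^ (1/2:ℝ) with hN2
  set N3 := (∫⁻ x, F3 x ^ (2:ℝ)) ^ (1/2:ℝ) with hN3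
  set N4 := (∫⁻ x, F4 x ^ (2:ℝ)) ^ (1/2:ℝ) with hN4
  set N5 := (∫⁻ x, F5 x ^ (2:ℝ)) ^ (1/2:ℝ) with hN5
  set N6 := (∫⁻ x, F6 x ^ (2:ℝ)) ^ (1/2:ℝ) with hN6
  have hug : Measurable fun p : ℝ × ℝ => F5 p.2 * F6 (-(p.1 + p.2)) :=
    (h5.comp measurable_snd).mul (h6.comp ((measurable_fst.add measurable_snd).neg))
  set g' : ℝ → ℝ≥0∞ := fun t => ∫⁻ ξ5, F5 ξ5 * F6 (-(t + ξ5)) with hg'def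
  have hg' : Measurable g' :=
    Measurable.lintegral_prod_right (f := fun t ξ5 => F5 ξ5 * F6 (-(t + ξ5))) hug
  set V : ℝ → ℝ≥0∞ := fun t => χ4 (-t) * g' t with hVdef
  have hV : Measurable V := (hχ4.comp measurable_neg).mul hg'
  have hum4 : Measurable fun p : ℝ × ℝ => F4 p.2 * V (p.1 + p.2) :=
    (h4.comp measurable_snd).mul (hV.comp (measurable_fst.add measurable_snd))
  set m4 : ℝ → ℝ≥0∞ := fun c => ∫⁻ ξ4, F4 ξ4 * V (c + ξ4) with hm4def
  have hm4 : Measurable m4 :=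
    Measurable.lintegral_prod_right (f := fun c ξ4 => F4 ξ4 * V (c + ξ4)) hum4
  set m3 : ℝ → ℝ → ℝ≥0∞ :=
    fun ξ1 ξ2 => ∫⁻ ξ3, F3 ξ3 * (χ1 (ξ2 + ξ3) * m4 (ξ1 + ξ2 + ξ3)) with hm3def
  have hm3 : Measurable fun p : ℝ × ℝ => m3 p.1 p.2 := by
    refine Measurable.lintegral_prod_right
      (f := fun p : ℝ × ℝ => fun ξ3 => F3 ξ3 * (χ1 (p.2 + ξ3) * m4 (p.1 + p.2 + ξ3))) ?_
    exact (h3.comp measurable_snd).mul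
      ((hχ1.comp ((measurable_fst.snd).add measurable_snd)).mul
        (hm4.comp (((measurable_fst.fst).add measurable_fst.snd).add measurable_snd)))
  -- the left-hand side in terms of m3
  have hLHS : (∫⁻ ξ1 : ℝ, F1 ξ1 * ∫⁻ ξ2 : ℝ, F2 ξ2 * ∫⁻ ξ3 : ℝ, F3 ξ3 *
      (χ1 (ξ2 + ξ3) * ∫⁻ ξ4 : ℝ, F4 ξ4 * (χ4 (-(ξ1 + ξ2 + ξ3 + ξ4)) *
        ∫⁻ ξ5 : ℝ, F5 ξ5 * F6 (-(ξ1 + ξ2 + ξ3 + ξ4 + ξ5)))))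
      = ∫⁻ ξ1 : ℝ, F1 ξ1 * ∫⁻ ξ2 : ℝ, F2 ξ2 * m3 ξ1 ξ2 := rfl
  rw [hLHS]
  -- key quantity
  set IV := ∫⁻ t, V t with hIV
  have step1 : ∫⁻ ξ1 : ℝ, F1 ξ1 * ∫⁻ ξ2 : ℝ, F2 ξ2 * m3 ξ1 ξ2
      = ∫⁻ ξ2 : ℝ, F2 ξ2 * ∫⁻ ξ3 : ℝ, F3 ξ3 *
          (χ1 (ξ2 + ξ3) * ∫⁻ ξ1 : ℝ, F1 ξ1 * m4 ((ξ2 + ξ3) + ξ1)) := by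
    calc ∫⁻ ξ1 : ℝ, F1 ξ1 * ∫⁻ ξ2 : ℝ, F2 ξ2 * m3 ξ1 ξ2
        = ∫⁻ ξ2 : ℝ, F2 ξ2 * ∫⁻ ξ1 : ℝ, F1 ξ1 * m3 ξ1 ξ2 := swap_after h1 h2 hm3
      _ = ∫⁻ ξ2 : ℝ, F2 ξ2 * ∫⁻ ξ3 : ℝ, F3 ξ3 *
            ∫⁻ ξ1 : ℝ, F1 ξ1 * (χ1 (ξ2 + ξ3) * m4 (ξ1 + ξ2 + ξ3)) := by
          refine lintegral_congr fun ξ2 => ?_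
          congr 1
          exact swap_after (W := fun ξ1 ξ3 => χ1 (ξ2 + ξ3) * m4 (ξ1 + ξ2 + ξ3)) h1 h3
            ((hχ1.comp (measurable_const.add measurable_snd)).mul
              (hm4.comp ((measurable_fst.add measurable_const).add measurable_snd)))
      _ = ∫⁻ ξ2 : ℝ, F2 ξ2 * ∫⁻ ξ3 : ℝ, F3 ξ3 *
            (χ1 (ξ2 + ξ3) * ∫⁻ ξ1 : ℝ, F1 ξ1 * m4 ((ξ2 + ξ3) + ξ1)) := by
          refine lintegral_congr fun ξ2 => ?_
          congr 1
          refine lintegral_congr fun ξ3 => ?_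
          congr 1
          calc ∫⁻ ξ1 : ℝ, F1 ξ1 * (χ1 (ξ2 + ξ3) * m4 (ξ1 + ξ2 + ξ3))
              = ∫⁻ ξ1 : ℝ, χ1 (ξ2 + ξ3) * (F1 ξ1 * m4 ((ξ2 + ξ3) + ξ1)) := by
                refine lintegral_congr fun ξ1 => ?_
                rw [show ξ1 + ξ2 + ξ3 = (ξ2 + ξ3) + ξ1 by ring]
                ring
            _ = χ1 (ξ2 + ξ3) * ∫⁻ ξ1 : ℝ, F1 ξ1 * m4 ((ξ2 + ξ3) + ξ1) :=
                lintegral_const_mul _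
                  (h1.mul (hm4.comp (measurable_const.add measurable_id)))
  rw [step1]
  have hQ : ∀ c : ℝ, ∫⁻ ξ1 : ℝ, F1 ξ1 * m4 (c + ξ1) ≤ N1 * N4 * IV := fun c =>
    cs2 h1 h4 hV c
  have step2 : ∫⁻ ξ2 : ℝ, F2 ξ2 * ∫⁻ ξ3 : ℝ, F3 ξ3 *
        (χ1 (ξ2 + ξ3) * ∫⁻ ξ1 : ℝ, F1 ξ1 * m4 ((ξ2 + ξ3) + ξ1))
      ≤ ∫⁻ ξ2 : ℝ, F2 ξ2 * ∫⁻ ξ3 : ℝ, F3 ξ3 * (χ1 (ξ2 + ξ3) * (N1 * N4 * IV)) := by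
    refine lintegral_mono fun ξ2 => ?_
    refine mul_le_mul_right (lintegral_mono fun ξ3 => ?_) _
    exact mul_le_mul_right (mul_le_mul_right (hQ (ξ2 + ξ3)) _) _
  have step3 : ∫⁻ ξ2 : ℝ, F2 ξ2 * ∫⁻ ξ3 : ℝ, F3 ξ3 * (χ1 (ξ2 + ξ3) * (N1 * N4 * IV))
      ≤ N2 * N3 * ((∫⁻ t, χ1 t) * (N1 * N4 * IV)) := by
    have hV2 : Measurable fun t : ℝ => χ1 t * (N1 * N4 * IV) := hχ1.mul_const _
    have heq : ∫⁻ ξ2 : ℝ, F2 ξ2 * ∫⁻ ξ3 : ℝ, F3 ξ3 * (χ1 (ξ2 + ξ3) * (N1 * N4 * IV))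
        = ∫⁻ ξ2 : ℝ, F2 ξ2 * ∫⁻ ξ3 : ℝ, F3 ξ3 *
            ((fun t : ℝ => χ1 t * (N1 * N4 * IV)) ((0:ℝ) + ξ2 + ξ3)) := by
      refine lintegral_congr fun ξ2 => ?_
      congr 1
      refine lintegral_congr fun ξ3 => ?_
      norm_num
    rw [heq]
    calc ∫⁻ ξ2 : ℝ, F2 ξ2 * ∫⁻ ξ3 : ℝ, F3 ξ3 *
            ((fun t : ℝ => χ1 t * (N1 * N4 * IV)) ((0:ℝ) + ξ2 + ξ3))
        ≤ N2 * N3 * ∫⁻ t, χ1 t * (N1 * N4 * IV) := cs2 h2 h3 hV2 0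
      _ = N2 * N3 * ((∫⁻ t, χ1 t) * (N1 * N4 * IV)) := by
          rw [lintegral_mul_const _ hχ1]
  -- bounds for IV
  have hg'le : ∀ t : ℝ, g' t ≤ N5 * N6 := by
    intro t
    have hcomp : Measurable fun ξ5 : ℝ => F6 (-(t + ξ5)) :=
      h6.comp ((measurable_const.add measurable_id).neg)
    calc g' t ≤ (∫⁻ x, F5 x ^ (2:ℝ)) ^ (1/2:ℝ) *
          (∫⁻ x, F6 (-(t + x)) ^ (2:ℝ)) ^ (1/2:ℝ) := cs1 h5.aemeasurable hcomp.aemeasurable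
      _ = N5 * N6 := by
          have := lint_neg_add (G := fun y => F6 y ^ (2:ℝ)) t (h6.pow measurable_const)
          rw [this]
  have havea : IV ≤ (∫⁻ t, χ4 t) * (N5 * N6) := by
    calc IV ≤ ∫⁻ t, χ4 (-t) * (N5 * N6) :=
          lintegral_mono fun t => mul_le_mul_right (hg'le t) _
      _ = (∫⁻ t, χ4 (-t)) * (N5 * N6) := lintegral_mul_const _ (hχ4.comp measurable_neg)
      _ = (∫⁻ t, χ4 t) * (N5 * N6) := by
          rw [(Measure.measurePreserving_neg (volume : Measure ℝ)).lintegral_comp hχ4]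
  have haveb : IV ≤ (∫⁻ t, F5 t) * (∫⁻ t, F6 t) := by
    calc IV ≤ ∫⁻ t, g' t := by
          refine lintegral_mono fun t => ?_
          calc χ4 (-t) * g' t ≤ 1 * g' t := mul_le_mul_left (hχ4le _) _
            _ = g' t := one_mul _
      _ = ∫⁻ ξ5, ∫⁻ t, F5 ξ5 * F6 (-(t + ξ5)) := by
          exact lintegral_lintegral_swap hug.aemeasurable
      _ = ∫⁻ ξ5, F5 ξ5 * ∫⁻ t, F6 (-(t + ξ5)) := by
          refine lintegral_congr fun ξ5 => ?_
          exact lintegral_const_mul _ (h6.comp ((measurable_id.add measurable_const).neg))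
      _ = ∫⁻ ξ5, F5 ξ5 * ∫⁻ t, F6 t := by
          refine lintegral_congr fun ξ5 => ?_
          congr 1
          calc ∫⁻ t, F6 (-(t + ξ5)) = ∫⁻ t, F6 (-(ξ5 + t)) := by
                refine lintegral_congr fun t => ?_
                rw [show -(t + ξ5) = -(ξ5 + t) by ring]
            _ = ∫⁻ t, F6 t := lint_neg_add ξ5 h6
      _ = (∫⁻ t, F5 t) * (∫⁻ t, F6 t) := lintegral_mul_const _ h5
  have hIVle : IV ≤ ((∫⁻ t, χ4 t) * (N5 * N6)) ^ (1/2:ℝ) *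
      ((∫⁻ t, F5 t) * (∫⁻ t, F6 t)) ^ (1/2:ℝ) := le_geom_mean havea haveb
  calc ∫⁻ ξ2 : ℝ, F2 ξ2 * ∫⁻ ξ3 : ℝ, F3 ξ3 *
        (χ1 (ξ2 + ξ3) * ∫⁻ ξ1 : ℝ, F1 ξ1 * m4 ((ξ2 + ξ3) + ξ1))
      ≤ N2 * N3 * ((∫⁻ t, χ1 t) * (N1 * N4 * IV)) := le_trans step2 step3
    _ ≤ N2 * N3 * ((∫⁻ t, χ1 t) * (N1 * N4 * (((∫⁻ t, χ4 t) * (N5 * N6)) ^ (1/2:ℝ) *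
          ((∫⁻ t, F5 t) * (∫⁻ t, F6 t)) ^ (1/2:ℝ)))) := by
        exact mul_le_mul_right (mul_le_mul_right (mul_le_mul_right hIVle _) _) _
    _ = (∫⁻ t, χ1 t) *
          (((∫⁻ t, χ4 t) * (N5 * N6)) ^ (1/2:ℝ) *
            ((∫⁻ t, F5 t) * (∫⁻ t, F6 t)) ^ (1/2:ℝ)) * (N1 * N2 * N3 * N4) := by
        ring


lemma final_alg (A B C D x y z : ℝ≥0∞) :
    A * ((B * (x * y)) ^ (1/2:ℝ) * ((x * C ^ (1/2:ℝ)) * (y * D ^ (1/2:ℝ))) ^ (1/2:ℝ)) * z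
      = A * B ^ (1/2:ℝ) * C ^ (1/4:ℝ) * D ^ (1/4:ℝ) * (z * (x * y)) := by
  have hr : (0:ℝ) ≤ 1/2 := by norm_num
  rw [ENNReal.mul_rpow_of_nonneg _ _ hr, ENNReal.mul_rpow_of_nonneg _ _ hr,
      ENNReal.mul_rpow_of_nonneg _ _ hr, ENNReal.mul_rpow_of_nonneg _ _ hr,
      ENNReal.mul_rpow_of_nonneg _ _ hr,
      show ((C ^ (1/2:ℝ)) ^ (1/2:ℝ)) = C ^ (1/4:ℝ) by rw [← ENNReal.rpow_mul]; norm_num,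
      show ((D ^ (1/2:ℝ)) ^ (1/2:ℝ)) = D ^ (1/4:ℝ) by rw [← ENNReal.rpow_mul]; norm_num]
  calc A * (B ^ (1/2:ℝ) * (x ^ (1/2:ℝ) * y ^ (1/2:ℝ)) *
        (x ^ (1/2:ℝ) * C ^ (1/4:ℝ) * (y ^ (1/2:ℝ) * D ^ (1/4:ℝ)))) * z
      = A * B ^ (1/2:ℝ) * C ^ (1/4:ℝ) * D ^ (1/4:ℝ) *
        (z * ((x ^ (1/2:ℝ) * x ^ (1/2:ℝ)) * (y ^ (1/2:ℝ) * y ^ (1/2:ℝ)))) := by ring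
    _ = A * B ^ (1/2:ℝ) * C ^ (1/4:ℝ) * D ^ (1/4:ℝ) * (z * (x * y)) := by
        rw [halfhalf, halfhalf]

lemma keyStep {g : ℝ → ℝ} {h : ℝ → ℝ≥0∞} (hg : ∀ x, 0 ≤ g x)
    (hle : ∀ x, ENNReal.ofReal (g x) ≤ h x) :
    ENNReal.ofReal (∫ x, g x) ≤ ∫⁻ x, h x := by
  have h1 : ∫ x, g x ≤ (∫⁻ x, ENNReal.ofReal (g x)).toReal := by
    by_cases hint : Integrable g volume
    · rw [integral_eq_lintegral_of_nonneg_ae (ae_of_all _ hg) hint.1]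
    · rw [integral_undef hint]; exact ENNReal.toReal_nonneg
  calc ENNReal.ofReal (∫ x, g x) ≤ ENNReal.ofReal (∫⁻ x, ENNReal.ofReal (g x)).toReal :=
        ENNReal.ofReal_le_ofReal h1
  _ ≤ ∫⁻ x, ENNReal.ofReal (g x) := ENNReal.ofReal_toReal_le
  _ ≤ ∫⁻ x, h x := lintegral_mono hle


end SixLin

section Main
open SixLin

theorem refined_sixlinear_convolution_estimate :
    ∃ C > 0, ∀ (M1 M4 N5 N6 : ℝ), 0 < M1 → 0 < M4 → 0 < N5 → 0 < N6 →
      ∀ (φM1 φM4 : ℝ → ℝ),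
      (∀ ξ, 0 ≤ φM1 ξ ∧ φM1 ξ ≤ 1) →
      (∀ ξ, φM1 ξ ≠ 0 → M1 / 2 ≤ |ξ| ∧ |ξ| ≤ 2 * M1) →
      (∀ ξ, 0 ≤ φM4 ξ ∧ φM4 ξ ≤ 1) →
      (∀ ξ, φM4 ξ ≠ 0 → M4 / 2 ≤ |ξ| ∧ |ξ| ≤ 2 * M4) →
      ∀ (f1 f2 f3 f4 f5 f6 : ℝ → ℂ),
        MemLp f1 2 volume → MemLp f2 2 volume → MemLp f3 2 volume →
        MemLp f4 2 volume → MemLp f5 2 volume → MemLp f6 2 volume →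
        (∀ ξ, f5 ξ ≠ 0 → N5 / 2 ≤ |ξ| ∧ |ξ| ≤ 2 * N5) →
        (∀ ξ, f6 ξ ≠ 0 → N6 / 2 ≤ |ξ| ∧ |ξ| ≤ 2 * N6) →
        (∫ ξ1 : ℝ, ∫ ξ2 : ℝ, ∫ ξ3 : ℝ, ∫ ξ4 : ℝ, ∫ ξ5 : ℝ,
            φM1 (ξ2 + ξ3) * φM4 (ξ5 + (-(ξ1 + ξ2 + ξ3 + ξ4 + ξ5))) *
              (‖f1 ξ1‖ * ‖f2 ξ2‖ * ‖f3 ξ3‖ * ‖f4 ξ4‖ * ‖f5 ξ5‖ *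
                ‖f6 (-(ξ1 + ξ2 + ξ3 + ξ4 + ξ5))‖)) ≤
          C * M1 * M4 ^ ((1 : ℝ) / 2) * N5 ^ ((1 : ℝ) / 4) * N6 ^ ((1 : ℝ) / 4) *
            ((eLpNorm f1 2 volume).toReal * (eLpNorm f2 2 volume).toReal *
              (eLpNorm f3 2 volume).toReal * (eLpNorm f4 2 volume).toReal *
              (eLpNorm f5 2 volume).toReal * (eLpNorm f6 2 volume).toReal) := by
  refine ⟨16, by norm_num, ?_⟩
  intro M1 M4 N5 N6 hM1 hM4 hN5 hN6 φ1 φ4 hφ1b hφ1s hφ4b hφ4s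
    f1 f2 f3 f4 f5 f6 hf1 hf2 hf3 hf4 hf5 hf6 hs5 hs6
  -- measurable representatives and enorm functions
  set e1 : ℝ → ℝ≥0∞ := fun ξ => (‖f1 ξ‖₊ : ℝ≥0∞) with he1def
  set e2 : ℝ → ℝ≥0∞ := fun ξ => (‖f2 ξ‖₊ : ℝ≥0∞) with he2def
  set e3 : ℝ → ℝ≥0∞ := fun ξ => (‖f3 ξ‖₊ : ℝ≥0∞) with he3def
  set e4 : ℝ → ℝ≥0∞ := fun ξ => (‖f4 ξ‖₊ : ℝ≥0∞) with he4def
  set e5 : ℝ → ℝ≥0∞ := fun ξ => (‖f5 ξ‖₊ : ℝ≥0∞) with he5def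
  set e6 : ℝ → ℝ≥0∞ := fun ξ => (‖f6 ξ‖₊ : ℝ≥0∞) with he6def
  set g1 : ℝ → ℂ := hf1.1.mk f1 with hg1def
  set g2 : ℝ → ℂ := hf2.1.mk f2 with hg2def
  set g3 : ℝ → ℂ := hf3.1.mk f3 with hg3def
  set g4 : ℝ → ℂ := hf4.1.mk f4 with hg4def
  set g5 : ℝ → ℂ := hf5.1.mk f5 with hg5def
  set g6 : ℝ → ℂ := hf6.1.mk f6 with hg6def
  set F1 : ℝ → ℝ≥0∞ := fun ξ => (‖g1 ξ‖₊ : ℝ≥0∞) with hF1def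
  set F2 : ℝ → ℝ≥0∞ := fun ξ => (‖g2 ξ‖₊ : ℝ≥0∞) with hF2def
  set F3 : ℝ → ℝ≥0∞ := fun ξ => (‖g3 ξ‖₊ : ℝ≥0∞) with hF3def
  set F4 : ℝ → ℝ≥0∞ := fun ξ => (‖g4 ξ‖₊ : ℝ≥0∞) with hF4def
  set F5 : ℝ → ℝ≥0∞ := fun ξ => (‖g5 ξ‖₊ : ℝ≥0∞) with hF5def
  set F6 : ℝ → ℝ≥0∞ := fun ξ => (‖g6 ξ‖₊ : ℝ≥0∞) with hF6def
  have hFm1 : Measurable F1 := hf1.1.stronglyMeasurable_mk.measurable.nnnorm.coe_nnreal_ennreal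
  have hFm2 : Measurable F2 := hf2.1.stronglyMeasurable_mk.measurable.nnnorm.coe_nnreal_ennreal
  have hFm3 : Measurable F3 := hf3.1.stronglyMeasurable_mk.measurable.nnnorm.coe_nnreal_ennreal
  have hFm4 : Measurable F4 := hf4.1.stronglyMeasurable_mk.measurable.nnnorm.coe_nnreal_ennreal
  have hFm5 : Measurable F5 := hf5.1.stronglyMeasurable_mk.measurable.nnnorm.coe_nnreal_ennreal
  have hFm6 : Measurable F6 := hf6.1.stronglyMeasurable_mk.measurable.nnnorm.coe_nnreal_ennreal
  have haeF1 : e1 =ᵐ[volume] F1 := hf1.1.ae_eq_mk.mono fun ξ hξ => by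
    simp only [he1def, hF1def, hξ, hg1def]
  have haeF2 : e2 =ᵐ[volume] F2 := hf2.1.ae_eq_mk.mono fun ξ hξ => by
    simp only [he2def, hF2def, hξ, hg2def]
  have haeF3 : e3 =ᵐ[volume] F3 := hf3.1.ae_eq_mk.mono fun ξ hξ => by
    simp only [he3def, hF3def, hξ, hg3def]
  have haeF4 : e4 =ᵐ[volume] F4 := hf4.1.ae_eq_mk.mono fun ξ hξ => by
    simp only [he4def, hF4def, hξ, hg4def]
  have haeF5 : e5 =ᵐ[volume] F5 := hf5.1.ae_eq_mk.mono fun ξ hξ => by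
    simp only [he5def, hF5def, hξ, hg5def]
  have haeF6 : e6 =ᵐ[volume] F6 := hf6.1.ae_eq_mk.mono fun ξ hξ => by
    simp only [he6def, hF6def, hξ, hg6def]
  -- finiteness of point values
  have he1top : ∀ ξ, e1 ξ ≠ ∞ := fun ξ => ENNReal.coe_ne_top
  have he2top : ∀ ξ, e2 ξ ≠ ∞ := fun ξ => ENNReal.coe_ne_top
  have he3top : ∀ ξ, e3 ξ ≠ ∞ := fun ξ => ENNReal.coe_ne_top
  have he4top : ∀ ξ, e4 ξ ≠ ∞ := fun ξ => ENNReal.coe_ne_top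
  -- annuli
  set S : ℝ → Set ℝ := fun M => {ξ : ℝ | M / 2 ≤ |ξ| ∧ |ξ| ≤ 2 * M} with hSdef
  have hSmeas : ∀ M : ℝ, MeasurableSet (S M) := by
    intro M
    have : S M = abs ⁻¹' (Icc (M / 2) (2 * M)) := by
      ext ξ; simp [hSdef, Icc]
    rw [this]
    exact measurableSet_Icc.preimage continuous_abs.measurable
  have hSvol : ∀ M : ℝ, volume (S M) ≤ ENNReal.ofReal (4 * M) := by
    intro M
    have hsub : S M ⊆ Icc (-(2 * M)) (2 * M) := by
      intro ξ hξ
      exact abs_le.mp hξ.2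
    calc volume (S M) ≤ volume (Icc (-(2 * M)) (2 * M)) := measure_mono hsub
      _ = ENNReal.ofReal (4 * M) := by rw [Real.volume_Icc]; congr 1; ring
  set χ1 : ℝ → ℝ≥0∞ := (S M1).indicator (fun _ => (1 : ℝ≥0∞)) with hχ1def
  set χ4 : ℝ → ℝ≥0∞ := (S M4).indicator (fun _ => (1 : ℝ≥0∞)) with hχ4def
  set χ5 : ℝ → ℝ≥0∞ := (S N5).indicator (fun _ => (1 : ℝ≥0∞)) with hχ5def
  set χ6 : ℝ → ℝ≥0∞ := (S N6).indicator (fun _ => (1 : ℝ≥0∞)) with hχ6def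
  have hχ1m : Measurable χ1 := measurable_const.indicator (hSmeas M1)
  have hχ4m : Measurable χ4 := measurable_const.indicator (hSmeas M4)
  have hχ5m : Measurable χ5 := measurable_const.indicator (hSmeas N5)
  have hχ6m : Measurable χ6 := measurable_const.indicator (hSmeas N6)
  have hχ1le : ∀ t, χ1 t ≤ 1 := by
    intro t; by_cases h : t ∈ S M1 <;> simp [hχ1def, Set.indicator, h]
  have hχ4le : ∀ t, χ4 t ≤ 1 := by
    intro t; by_cases h : t ∈ S M4 <;> simp [hχ4def, Set.indicator, h]
  have hφχ1 : ∀ ξ, ENNReal.ofReal (φ1 ξ) ≤ χ1 ξ := by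
    intro ξ
    by_cases h : φ1 ξ = 0
    · simp [h]
    · have hm : ξ ∈ S M1 := hφ1s ξ h
      calc ENNReal.ofReal (φ1 ξ) ≤ 1 := ENNReal.ofReal_le_one.mpr (hφ1b ξ).2
        _ = χ1 ξ := by simp [hχ1def, Set.indicator, hm]
  have hφχ4 : ∀ ξ, ENNReal.ofReal (φ4 ξ) ≤ χ4 ξ := by
    intro ξ
    by_cases h : φ4 ξ = 0
    · simp [h]
    · have hm : ξ ∈ S M4 := hφ4s ξ h
      calc ENNReal.ofReal (φ4 ξ) ≤ 1 := ENNReal.ofReal_le_one.mpr (hφ4b ξ).2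
        _ = χ4 ξ := by simp [hχ4def, Set.indicator, hm]
  have hχ1top : ∀ t, χ1 t ≠ ∞ := fun t => (lt_of_le_of_lt (hχ1le t) one_lt_top).ne
  have hχ4top : ∀ t, χ4 t ≠ ∞ := fun t => (lt_of_le_of_lt (hχ4le t) one_lt_top).ne

  -- nonnegativity of the integrand
  have hbase_nn : ∀ ξ1 ξ2 ξ3 ξ4 ξ5 : ℝ,
      0 ≤ φ1 (ξ2 + ξ3) * φ4 (ξ5 + -(ξ1 + ξ2 + ξ3 + ξ4 + ξ5)) *
        (‖f1 ξ1‖ * ‖f2 ξ2‖ * ‖f3 ξ3‖ * ‖f4 ξ4‖ * ‖f5 ξ5‖ *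
          ‖f6 (-(ξ1 + ξ2 + ξ3 + ξ4 + ξ5))‖) := fun ξ1 ξ2 ξ3 ξ4 ξ5 =>
    mul_nonneg (mul_nonneg (hφ1b _).1 (hφ4b _).1) (by positivity)
  -- Stage 1 : from Bochner integrals to lintegrals of measurable representatives
  have key5 : ∀ ξ1 ξ2 ξ3 ξ4 : ℝ,
      ENNReal.ofReal (∫ ξ5 : ℝ, φ1 (ξ2 + ξ3) * φ4 (ξ5 + -(ξ1 + ξ2 + ξ3 + ξ4 + ξ5)) *
        (‖f1 ξ1‖ * ‖f2 ξ2‖ * ‖f3 ξ3‖ * ‖f4 ξ4‖ * ‖f5 ξ5‖ *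
          ‖f6 (-(ξ1 + ξ2 + ξ3 + ξ4 + ξ5))‖))
      ≤ χ1 (ξ2 + ξ3) * (e1 ξ1 * e2 ξ2 * e3 ξ3) *
        (e4 ξ4 * (χ4 (-(ξ1 + ξ2 + ξ3 + ξ4)) *
          ∫⁻ ξ5 : ℝ, F5 ξ5 * F6 (-(ξ1 + ξ2 + ξ3 + ξ4 + ξ5)))) := by
    intro ξ1 ξ2 ξ3 ξ4
    have hCtop : χ1 (ξ2 + ξ3) * (e1 ξ1 * e2 ξ2 * e3 ξ3) *
        (e4 ξ4 * χ4 (-(ξ1 + ξ2 + ξ3 + ξ4))) ≠ ∞ :=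
      ENNReal.mul_ne_top
        (ENNReal.mul_ne_top (hχ1top _)
          (ENNReal.mul_ne_top (ENNReal.mul_ne_top (he1top _) (he2top _)) (he3top _)))
        (ENNReal.mul_ne_top (he4top _) (hχ4top _))
    have hle : ∀ ξ5 : ℝ,
        ENNReal.ofReal (φ1 (ξ2 + ξ3) * φ4 (ξ5 + -(ξ1 + ξ2 + ξ3 + ξ4 + ξ5)) *
          (‖f1 ξ1‖ * ‖f2 ξ2‖ * ‖f3 ξ3‖ * ‖f4 ξ4‖ * ‖f5 ξ5‖ *
            ‖f6 (-(ξ1 + ξ2 + ξ3 + ξ4 + ξ5))‖))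
        ≤ (χ1 (ξ2 + ξ3) * (e1 ξ1 * e2 ξ2 * e3 ξ3) *
            (e4 ξ4 * χ4 (-(ξ1 + ξ2 + ξ3 + ξ4)))) *
          (e5 ξ5 * e6 (-(ξ1 + ξ2 + ξ3 + ξ4 + ξ5))) := by
      intro ξ5
      have harg : ξ5 + -(ξ1 + ξ2 + ξ3 + ξ4 + ξ5) = -(ξ1 + ξ2 + ξ3 + ξ4) := by ring
      rw [harg,
        ENNReal.ofReal_mul (mul_nonneg (hφ1b _).1 (hφ4b _).1),
        ENNReal.ofReal_mul (hφ1b _).1]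
      have hnorm : ENNReal.ofReal (‖f1 ξ1‖ * ‖f2 ξ2‖ * ‖f3 ξ3‖ * ‖f4 ξ4‖ * ‖f5 ξ5‖ *
          ‖f6 (-(ξ1 + ξ2 + ξ3 + ξ4 + ξ5))‖)
          = e1 ξ1 * e2 ξ2 * e3 ξ3 * e4 ξ4 * e5 ξ5 * e6 (-(ξ1 + ξ2 + ξ3 + ξ4 + ξ5)) := by
        rw [ENNReal.ofReal_mul (by positivity), ENNReal.ofReal_mul (by positivity),
          ENNReal.ofReal_mul (by positivity), ENNReal.ofReal_mul (by positivity),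
          ENNReal.ofReal_mul (by positivity)]
        simp only [ofReal_norm, enorm_eq_nnnorm, he1def, he2def, he3def, he4def, he5def, he6def]
      rw [hnorm]
      calc ENNReal.ofReal (φ1 (ξ2 + ξ3)) * ENNReal.ofReal (φ4 (-(ξ1 + ξ2 + ξ3 + ξ4))) *
            (e1 ξ1 * e2 ξ2 * e3 ξ3 * e4 ξ4 * e5 ξ5 * e6 (-(ξ1 + ξ2 + ξ3 + ξ4 + ξ5)))
          ≤ χ1 (ξ2 + ξ3) * χ4 (-(ξ1 + ξ2 + ξ3 + ξ4)) *
            (e1 ξ1 * e2 ξ2 * e3 ξ3 * e4 ξ4 * e5 ξ5 * e6 (-(ξ1 + ξ2 + ξ3 + ξ4 + ξ5))) :=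
            mul_le_mul' (mul_le_mul' (hφχ1 _) (hφχ4 _)) le_rfl
        _ = (χ1 (ξ2 + ξ3) * (e1 ξ1 * e2 ξ2 * e3 ξ3) *
              (e4 ξ4 * χ4 (-(ξ1 + ξ2 + ξ3 + ξ4)))) *
            (e5 ξ5 * e6 (-(ξ1 + ξ2 + ξ3 + ξ4 + ξ5))) := by ring
    calc ENNReal.ofReal (∫ ξ5 : ℝ, φ1 (ξ2 + ξ3) * φ4 (ξ5 + -(ξ1 + ξ2 + ξ3 + ξ4 + ξ5)) *
          (‖f1 ξ1‖ * ‖f2 ξ2‖ * ‖f3 ξ3‖ * ‖f4 ξ4‖ * ‖f5 ξ5‖ *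
            ‖f6 (-(ξ1 + ξ2 + ξ3 + ξ4 + ξ5))‖))
        ≤ ∫⁻ ξ5 : ℝ, (χ1 (ξ2 + ξ3) * (e1 ξ1 * e2 ξ2 * e3 ξ3) *
            (e4 ξ4 * χ4 (-(ξ1 + ξ2 + ξ3 + ξ4)))) *
          (e5 ξ5 * e6 (-(ξ1 + ξ2 + ξ3 + ξ4 + ξ5))) :=
          keyStep (hbase_nn ξ1 ξ2 ξ3 ξ4) hle
      _ = (χ1 (ξ2 + ξ3) * (e1 ξ1 * e2 ξ2 * e3 ξ3) * (e4 ξ4 * χ4 (-(ξ1 + ξ2 + ξ3 + ξ4)))) *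
            ∫⁻ ξ5 : ℝ, e5 ξ5 * e6 (-(ξ1 + ξ2 + ξ3 + ξ4 + ξ5)) :=
          lintegral_const_mul' _ _ hCtop
      _ = (χ1 (ξ2 + ξ3) * (e1 ξ1 * e2 ξ2 * e3 ξ3) * (e4 ξ4 * χ4 (-(ξ1 + ξ2 + ξ3 + ξ4)))) *
            ∫⁻ ξ5 : ℝ, F5 ξ5 * F6 (-(ξ1 + ξ2 + ξ3 + ξ4 + ξ5)) := by
          congr 1
          apply lintegral_congr_ae
          have hcomp : (fun ξ5 : ℝ => e6 (-(ξ1 + ξ2 + ξ3 + ξ4 + ξ5)))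
              =ᵐ[volume] fun ξ5 : ℝ => F6 (-(ξ1 + ξ2 + ξ3 + ξ4 + ξ5)) :=
            (mp_neg_add (ξ1 + ξ2 + ξ3 + ξ4)).quasiMeasurePreserving.ae_eq_comp haeF6
          exact haeF5.mul hcomp
      _ = χ1 (ξ2 + ξ3) * (e1 ξ1 * e2 ξ2 * e3 ξ3) *
            (e4 ξ4 * (χ4 (-(ξ1 + ξ2 + ξ3 + ξ4)) *
              ∫⁻ ξ5 : ℝ, F5 ξ5 * F6 (-(ξ1 + ξ2 + ξ3 + ξ4 + ξ5)))) := by ring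
  have key4 : ∀ ξ1 ξ2 ξ3 : ℝ,
      ENNReal.ofReal (∫ ξ4 : ℝ, ∫ ξ5 : ℝ,
        φ1 (ξ2 + ξ3) * φ4 (ξ5 + -(ξ1 + ξ2 + ξ3 + ξ4 + ξ5)) *
        (‖f1 ξ1‖ * ‖f2 ξ2‖ * ‖f3 ξ3‖ * ‖f4 ξ4‖ * ‖f5 ξ5‖ *
          ‖f6 (-(ξ1 + ξ2 + ξ3 + ξ4 + ξ5))‖))
      ≤ χ1 (ξ2 + ξ3) * (e1 ξ1 * e2 ξ2 * e3 ξ3) *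
        ∫⁻ ξ4 : ℝ, F4 ξ4 * (χ4 (-(ξ1 + ξ2 + ξ3 + ξ4)) *
          ∫⁻ ξ5 : ℝ, F5 ξ5 * F6 (-(ξ1 + ξ2 + ξ3 + ξ4 + ξ5))) := by
    intro ξ1 ξ2 ξ3
    have hC3top : χ1 (ξ2 + ξ3) * (e1 ξ1 * e2 ξ2 * e3 ξ3) ≠ ∞ :=
      ENNReal.mul_ne_top (hχ1top _)
        (ENNReal.mul_ne_top (ENNReal.mul_ne_top (he1top _) (he2top _)) (he3top _))
    calc ENNReal.ofReal (∫ ξ4 : ℝ, ∫ ξ5 : ℝ,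
          φ1 (ξ2 + ξ3) * φ4 (ξ5 + -(ξ1 + ξ2 + ξ3 + ξ4 + ξ5)) *
          (‖f1 ξ1‖ * ‖f2 ξ2‖ * ‖f3 ξ3‖ * ‖f4 ξ4‖ * ‖f5 ξ5‖ *
            ‖f6 (-(ξ1 + ξ2 + ξ3 + ξ4 + ξ5))‖))
        ≤ ∫⁻ ξ4 : ℝ, χ1 (ξ2 + ξ3) * (e1 ξ1 * e2 ξ2 * e3 ξ3) *
            (e4 ξ4 * (χ4 (-(ξ1 + ξ2 + ξ3 + ξ4)) *
              ∫⁻ ξ5 : ℝ, F5 ξ5 * F6 (-(ξ1 + ξ2 + ξ3 + ξ4 + ξ5)))) :=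
          keyStep (fun ξ4 => integral_nonneg (hbase_nn ξ1 ξ2 ξ3 ξ4))
            (fun ξ4 => key5 ξ1 ξ2 ξ3 ξ4)
      _ = χ1 (ξ2 + ξ3) * (e1 ξ1 * e2 ξ2 * e3 ξ3) *
            ∫⁻ ξ4 : ℝ, e4 ξ4 * (χ4 (-(ξ1 + ξ2 + ξ3 + ξ4)) *
              ∫⁻ ξ5 : ℝ, F5 ξ5 * F6 (-(ξ1 + ξ2 + ξ3 + ξ4 + ξ5))) :=
          lintegral_const_mul' _ _ hC3top
      _ = χ1 (ξ2 + ξ3) * (e1 ξ1 * e2 ξ2 * e3 ξ3) *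
            ∫⁻ ξ4 : ℝ, F4 ξ4 * (χ4 (-(ξ1 + ξ2 + ξ3 + ξ4)) *
              ∫⁻ ξ5 : ℝ, F5 ξ5 * F6 (-(ξ1 + ξ2 + ξ3 + ξ4 + ξ5))) := by
          congr 1
          exact lintegral_congr_ae (haeF4.mul (Filter.EventuallyEq.refl _ _))
  have key3 : ∀ ξ1 ξ2 : ℝ,
      ENNReal.ofReal (∫ ξ3 : ℝ, ∫ ξ4 : ℝ, ∫ ξ5 : ℝ,
        φ1 (ξ2 + ξ3) * φ4 (ξ5 + -(ξ1 + ξ2 + ξ3 + ξ4 + ξ5)) *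
        (‖f1 ξ1‖ * ‖f2 ξ2‖ * ‖f3 ξ3‖ * ‖f4 ξ4‖ * ‖f5 ξ5‖ *
          ‖f6 (-(ξ1 + ξ2 + ξ3 + ξ4 + ξ5))‖))
      ≤ e1 ξ1 * e2 ξ2 *
        ∫⁻ ξ3 : ℝ, F3 ξ3 * (χ1 (ξ2 + ξ3) *
          ∫⁻ ξ4 : ℝ, F4 ξ4 * (χ4 (-(ξ1 + ξ2 + ξ3 + ξ4)) *
            ∫⁻ ξ5 : ℝ, F5 ξ5 * F6 (-(ξ1 + ξ2 + ξ3 + ξ4 + ξ5)))) := by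
    intro ξ1 ξ2
    have hC2top : e1 ξ1 * e2 ξ2 ≠ ∞ := ENNReal.mul_ne_top (he1top _) (he2top _)
    calc ENNReal.ofReal (∫ ξ3 : ℝ, ∫ ξ4 : ℝ, ∫ ξ5 : ℝ,
          φ1 (ξ2 + ξ3) * φ4 (ξ5 + -(ξ1 + ξ2 + ξ3 + ξ4 + ξ5)) *
          (‖f1 ξ1‖ * ‖f2 ξ2‖ * ‖f3 ξ3‖ * ‖f4 ξ4‖ * ‖f5 ξ5‖ *
            ‖f6 (-(ξ1 + ξ2 + ξ3 + ξ4 + ξ5))‖))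
        ≤ ∫⁻ ξ3 : ℝ, e1 ξ1 * e2 ξ2 * (e3 ξ3 * (χ1 (ξ2 + ξ3) *
            ∫⁻ ξ4 : ℝ, F4 ξ4 * (χ4 (-(ξ1 + ξ2 + ξ3 + ξ4)) *
              ∫⁻ ξ5 : ℝ, F5 ξ5 * F6 (-(ξ1 + ξ2 + ξ3 + ξ4 + ξ5))))) := by
          refine keyStep (fun ξ3 => integral_nonneg fun ξ4 =>
            integral_nonneg (hbase_nn ξ1 ξ2 ξ3 ξ4)) (fun ξ3 => ?_)
          refine (key4 ξ1 ξ2 ξ3).trans (le_of_eq ?_)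
          ring
      _ = e1 ξ1 * e2 ξ2 * ∫⁻ ξ3 : ℝ, e3 ξ3 * (χ1 (ξ2 + ξ3) *
            ∫⁻ ξ4 : ℝ, F4 ξ4 * (χ4 (-(ξ1 + ξ2 + ξ3 + ξ4)) *
              ∫⁻ ξ5 : ℝ, F5 ξ5 * F6 (-(ξ1 + ξ2 + ξ3 + ξ4 + ξ5)))) :=
          lintegral_const_mul' _ _ hC2top
      _ = e1 ξ1 * e2 ξ2 * ∫⁻ ξ3 : ℝ, F3 ξ3 * (χ1 (ξ2 + ξ3) *
            ∫⁻ ξ4 : ℝ, F4 ξ4 * (χ4 (-(ξ1 + ξ2 + ξ3 + ξ4)) *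
              ∫⁻ ξ5 : ℝ, F5 ξ5 * F6 (-(ξ1 + ξ2 + ξ3 + ξ4 + ξ5)))) := by
          congr 1
          exact lintegral_congr_ae (haeF3.mul (Filter.EventuallyEq.refl _ _))
  have key2 : ∀ ξ1 : ℝ,
      ENNReal.ofReal (∫ ξ2 : ℝ, ∫ ξ3 : ℝ, ∫ ξ4 : ℝ, ∫ ξ5 : ℝ,
        φ1 (ξ2 + ξ3) * φ4 (ξ5 + -(ξ1 + ξ2 + ξ3 + ξ4 + ξ5)) *
        (‖f1 ξ1‖ * ‖f2 ξ2‖ * ‖f3 ξ3‖ * ‖f4 ξ4‖ * ‖f5 ξ5‖ *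
          ‖f6 (-(ξ1 + ξ2 + ξ3 + ξ4 + ξ5))‖))
      ≤ e1 ξ1 *
        ∫⁻ ξ2 : ℝ, F2 ξ2 * ∫⁻ ξ3 : ℝ, F3 ξ3 * (χ1 (ξ2 + ξ3) *
          ∫⁻ ξ4 : ℝ, F4 ξ4 * (χ4 (-(ξ1 + ξ2 + ξ3 + ξ4)) *
            ∫⁻ ξ5 : ℝ, F5 ξ5 * F6 (-(ξ1 + ξ2 + ξ3 + ξ4 + ξ5)))) := by
    intro ξ1
    calc ENNReal.ofReal (∫ ξ2 : ℝ, ∫ ξ3 : ℝ, ∫ ξ4 : ℝ, ∫ ξ5 : ℝ,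
          φ1 (ξ2 + ξ3) * φ4 (ξ5 + -(ξ1 + ξ2 + ξ3 + ξ4 + ξ5)) *
          (‖f1 ξ1‖ * ‖f2 ξ2‖ * ‖f3 ξ3‖ * ‖f4 ξ4‖ * ‖f5 ξ5‖ *
            ‖f6 (-(ξ1 + ξ2 + ξ3 + ξ4 + ξ5))‖))
        ≤ ∫⁻ ξ2 : ℝ, e1 ξ1 * (e2 ξ2 * ∫⁻ ξ3 : ℝ, F3 ξ3 * (χ1 (ξ2 + ξ3) *
            ∫⁻ ξ4 : ℝ, F4 ξ4 * (χ4 (-(ξ1 + ξ2 + ξ3 + ξ4)) *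
              ∫⁻ ξ5 : ℝ, F5 ξ5 * F6 (-(ξ1 + ξ2 + ξ3 + ξ4 + ξ5))))) := by
          refine keyStep (fun ξ2 => integral_nonneg fun ξ3 => integral_nonneg fun ξ4 =>
            integral_nonneg (hbase_nn ξ1 ξ2 ξ3 ξ4)) (fun ξ2 => ?_)
          refine (key3 ξ1 ξ2).trans (le_of_eq ?_)
          ring
      _ = e1 ξ1 * ∫⁻ ξ2 : ℝ, e2 ξ2 * ∫⁻ ξ3 : ℝ, F3 ξ3 * (χ1 (ξ2 + ξ3) *
            ∫⁻ ξ4 : ℝ, F4 ξ4 * (χ4 (-(ξ1 + ξ2 + ξ3 + ξ4)) *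
              ∫⁻ ξ5 : ℝ, F5 ξ5 * F6 (-(ξ1 + ξ2 + ξ3 + ξ4 + ξ5)))) :=
          lintegral_const_mul' _ _ (he1top _)
      _ = e1 ξ1 * ∫⁻ ξ2 : ℝ, F2 ξ2 * ∫⁻ ξ3 : ℝ, F3 ξ3 * (χ1 (ξ2 + ξ3) *
            ∫⁻ ξ4 : ℝ, F4 ξ4 * (χ4 (-(ξ1 + ξ2 + ξ3 + ξ4)) *
              ∫⁻ ξ5 : ℝ, F5 ξ5 * F6 (-(ξ1 + ξ2 + ξ3 + ξ4 + ξ5)))) := by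
          congr 1
          exact lintegral_congr_ae (haeF2.mul (Filter.EventuallyEq.refl _ _))
  have key1 :
      ENNReal.ofReal (∫ ξ1 : ℝ, ∫ ξ2 : ℝ, ∫ ξ3 : ℝ, ∫ ξ4 : ℝ, ∫ ξ5 : ℝ,
        φ1 (ξ2 + ξ3) * φ4 (ξ5 + -(ξ1 + ξ2 + ξ3 + ξ4 + ξ5)) *
        (‖f1 ξ1‖ * ‖f2 ξ2‖ * ‖f3 ξ3‖ * ‖f4 ξ4‖ * ‖f5 ξ5‖ *
          ‖f6 (-(ξ1 + ξ2 + ξ3 + ξ4 + ξ5))‖))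
      ≤ ∫⁻ ξ1 : ℝ, F1 ξ1 *
        ∫⁻ ξ2 : ℝ, F2 ξ2 * ∫⁻ ξ3 : ℝ, F3 ξ3 * (χ1 (ξ2 + ξ3) *
          ∫⁻ ξ4 : ℝ, F4 ξ4 * (χ4 (-(ξ1 + ξ2 + ξ3 + ξ4)) *
            ∫⁻ ξ5 : ℝ, F5 ξ5 * F6 (-(ξ1 + ξ2 + ξ3 + ξ4 + ξ5)))) := by
    calc ENNReal.ofReal (∫ ξ1 : ℝ, ∫ ξ2 : ℝ, ∫ ξ3 : ℝ, ∫ ξ4 : ℝ, ∫ ξ5 : ℝ,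
          φ1 (ξ2 + ξ3) * φ4 (ξ5 + -(ξ1 + ξ2 + ξ3 + ξ4 + ξ5)) *
          (‖f1 ξ1‖ * ‖f2 ξ2‖ * ‖f3 ξ3‖ * ‖f4 ξ4‖ * ‖f5 ξ5‖ *
            ‖f6 (-(ξ1 + ξ2 + ξ3 + ξ4 + ξ5))‖))
        ≤ ∫⁻ ξ1 : ℝ, e1 ξ1 *
            ∫⁻ ξ2 : ℝ, F2 ξ2 * ∫⁻ ξ3 : ℝ, F3 ξ3 * (χ1 (ξ2 + ξ3) *
              ∫⁻ ξ4 : ℝ, F4 ξ4 * (χ4 (-(ξ1 + ξ2 + ξ3 + ξ4)) *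
                ∫⁻ ξ5 : ℝ, F5 ξ5 * F6 (-(ξ1 + ξ2 + ξ3 + ξ4 + ξ5)))) :=
          keyStep (fun ξ1 => integral_nonneg fun ξ2 => integral_nonneg fun ξ3 =>
            integral_nonneg fun ξ4 => integral_nonneg (hbase_nn ξ1 ξ2 ξ3 ξ4)) key2
      _ = _ := lintegral_congr_ae (haeF1.mul (Filter.EventuallyEq.refl _ _))

  -- eLpNorm identifications
  have hsn1 : (∫⁻ x, F1 x ^ (2:ℝ)) ^ (1/2:ℝ) = eLpNorm f1 2 volume := by
    rw [eLpNorm_congr_ae hf1.1.ae_eq_mk,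
      eLpNorm_eq_lintegral_rpow_enorm_toReal (by norm_num) (by norm_num)]
    norm_num [hF1def]
    rfl
  have hsn2 : (∫⁻ x, F2 x ^ (2:ℝ)) ^ (1/2:ℝ) = eLpNorm f2 2 volume := by
    rw [eLpNorm_congr_ae hf2.1.ae_eq_mk,
      eLpNorm_eq_lintegral_rpow_enorm_toReal (by norm_num) (by norm_num)]
    norm_num [hF2def]
    rfl
  have hsn3 : (∫⁻ x, F3 x ^ (2:ℝ)) ^ (1/2:ℝ) = eLpNorm f3 2 volume := by
    rw [eLpNorm_congr_ae hf3.1.ae_eq_mk,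
      eLpNorm_eq_lintegral_rpow_enorm_toReal (by norm_num) (by norm_num)]
    norm_num [hF3def]
    rfl
  have hsn4 : (∫⁻ x, F4 x ^ (2:ℝ)) ^ (1/2:ℝ) = eLpNorm f4 2 volume := by
    rw [eLpNorm_congr_ae hf4.1.ae_eq_mk,
      eLpNorm_eq_lintegral_rpow_enorm_toReal (by norm_num) (by norm_num)]
    norm_num [hF4def]
    rfl
  have hsn5 : (∫⁻ x, F5 x ^ (2:ℝ)) ^ (1/2:ℝ) = eLpNorm f5 2 volume := by
    rw [eLpNorm_congr_ae hf5.1.ae_eq_mk,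
      eLpNorm_eq_lintegral_rpow_enorm_toReal (by norm_num) (by norm_num)]
    norm_num [hF5def]
    rfl
  have hsn6 : (∫⁻ x, F6 x ^ (2:ℝ)) ^ (1/2:ℝ) = eLpNorm f6 2 volume := by
    rw [eLpNorm_congr_ae hf6.1.ae_eq_mk,
      eLpNorm_eq_lintegral_rpow_enorm_toReal (by norm_num) (by norm_num)]
    norm_num [hF6def]
    rfl
  set n1 := eLpNorm f1 2 volume with hn1
  set n2 := eLpNorm f2 2 volume with hn2
  set n3 := eLpNorm f3 2 volume with hn3
  set n4 := eLpNorm f4 2 volume with hn4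
  set n5 := eLpNorm f5 2 volume with hn5
  set n6 := eLpNorm f6 2 volume with hn6
  -- indicator integrals
  have hIχ1 : ∫⁻ t, χ1 t ≤ ENNReal.ofReal (4 * M1) := by
    rw [hχ1def]
    calc ∫⁻ t, (S M1).indicator (fun _ => (1:ℝ≥0∞)) t = 1 * volume (S M1) :=
          lintegral_indicator_const (hSmeas M1) 1
      _ ≤ ENNReal.ofReal (4 * M1) := by rw [one_mul]; exact hSvol M1
  have hIχ4 : ∫⁻ t, χ4 t ≤ ENNReal.ofReal (4 * M4) := by
    rw [hχ4def]
    calc ∫⁻ t, (S M4).indicator (fun _ => (1:ℝ≥0∞)) t = 1 * volume (S M4) :=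
          lintegral_indicator_const (hSmeas M4) 1
      _ ≤ ENNReal.ofReal (4 * M4) := by rw [one_mul]; exact hSvol M4
  -- L¹ bounds for F5 and F6 using the support hypotheses
  have hIF5 : ∫⁻ t, F5 t ≤ n5 * ENNReal.ofReal (4 * N5) ^ (1/2:ℝ) := by
    calc ∫⁻ t, F5 t = ∫⁻ t, e5 t := (lintegral_congr_ae haeF5).symm
      _ = ∫⁻ t, e5 t * χ5 t := by
          refine lintegral_congr fun ξ => ?_
          by_cases h : f5 ξ = 0
          · simp [he5def, h]
          · have hm : ξ ∈ S N5 := hs5 ξ h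
            simp [hχ5def, Set.indicator, hm]
      _ ≤ (∫⁻ x, e5 x ^ (2:ℝ)) ^ (1/2:ℝ) * (∫⁻ x, χ5 x ^ (2:ℝ)) ^ (1/2:ℝ) :=
          cs1 hf5.1.enorm hχ5m.aemeasurable
      _ = n5 * (∫⁻ t, χ5 t) ^ (1/2:ℝ) := by
          rw [← hsn5]
          congr 2
          · exact lintegral_congr_ae (haeF5.mono fun ξ h => by simp only [h])
          · refine lintegral_congr fun t => ?_
            by_cases h : t ∈ S N5
            · simp [hχ5def, Set.indicator, h]
            · simp [hχ5def, Set.indicator, h,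
                ENNReal.zero_rpow_of_pos (by norm_num : (0:ℝ) < 2)]
      _ ≤ n5 * ENNReal.ofReal (4 * N5) ^ (1/2:ℝ) := by
          refine mul_le_mul_right (ENNReal.rpow_le_rpow ?_ (by norm_num)) _
          calc ∫⁻ t, χ5 t = 1 * volume (S N5) := lintegral_indicator_const (hSmeas N5) 1
            _ ≤ ENNReal.ofReal (4 * N5) := by rw [one_mul]; exact hSvol N5
  have hIF6 : ∫⁻ t, F6 t ≤ n6 * ENNReal.ofReal (4 * N6) ^ (1/2:ℝ) := by
    calc ∫⁻ t, F6 t = ∫⁻ t, e6 t := (lintegral_congr_ae haeF6).symm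
      _ = ∫⁻ t, e6 t * χ6 t := by
          refine lintegral_congr fun ξ => ?_
          by_cases h : f6 ξ = 0
          · simp [he6def, h]
          · have hm : ξ ∈ S N6 := hs6 ξ h
            simp [hχ6def, Set.indicator, hm]
      _ ≤ (∫⁻ x, e6 x ^ (2:ℝ)) ^ (1/2:ℝ) * (∫⁻ x, χ6 x ^ (2:ℝ)) ^ (1/2:ℝ) :=
          cs1 hf6.1.enorm hχ6m.aemeasurable
      _ = n6 * (∫⁻ t, χ6 t) ^ (1/2:ℝ) := by
          rw [← hsn6]
          congr 2
          · exact lintegral_congr_ae (haeF6.mono fun ξ h => by simp only [h])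
          · refine lintegral_congr fun t => ?_
            by_cases h : t ∈ S N6
            · simp [hχ6def, Set.indicator, h]
            · simp [hχ6def, Set.indicator, h,
                ENNReal.zero_rpow_of_pos (by norm_num : (0:ℝ) < 2)]
      _ ≤ n6 * ENNReal.ofReal (4 * N6) ^ (1/2:ℝ) := by
          refine mul_le_mul_right (ENNReal.rpow_le_rpow ?_ (by norm_num)) _
          calc ∫⁻ t, χ6 t = 1 * volume (S N6) := lintegral_indicator_const (hSmeas N6) 1
            _ ≤ ENNReal.ofReal (4 * N6) := by rw [one_mul]; exact hSvol N6
  -- real-number arithmetic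
  have h42 : (4:ℝ) ^ (1/2:ℝ) = 2 := by
    rw [show (4:ℝ) = 2 ^ (2:ℕ) by norm_num, ← Real.rpow_natCast 2 2,
      ← Real.rpow_mul (by norm_num)]
    norm_num
  have h44 : (4:ℝ) ^ (1/4:ℝ) * (4:ℝ) ^ (1/4:ℝ) = 2 := by
    rw [← Real.rpow_add (by norm_num : (0:ℝ) < 4),
      show (1/4:ℝ) + (1/4:ℝ) = 1/2 by norm_num, h42]
  have hreal : (4 * M1) * ((4 * M4) ^ (1/2:ℝ)) * ((4 * N5) ^ (1/4:ℝ)) *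
        ((4 * N6) ^ (1/4:ℝ)) *
        ((n1.toReal * n2.toReal * n3.toReal * n4.toReal) * (n5.toReal * n6.toReal))
      = 16 * M1 * M4 ^ ((1:ℝ)/2) * N5 ^ ((1:ℝ)/4) * N6 ^ ((1:ℝ)/4) *
        (n1.toReal * n2.toReal * n3.toReal * n4.toReal * n5.toReal * n6.toReal) := by
    rw [Real.mul_rpow (by norm_num) hM4.le, Real.mul_rpow (by norm_num) hN5.le,
      Real.mul_rpow (by norm_num) hN6.le]
    calc (4 * M1) * ((4:ℝ) ^ (1/2:ℝ) * M4 ^ (1/2:ℝ)) *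
          ((4:ℝ) ^ (1/4:ℝ) * N5 ^ (1/4:ℝ)) * ((4:ℝ) ^ (1/4:ℝ) * N6 ^ (1/4:ℝ)) *
          ((n1.toReal * n2.toReal * n3.toReal * n4.toReal) * (n5.toReal * n6.toReal))
        = (4 * (4:ℝ) ^ (1/2:ℝ) * ((4:ℝ) ^ (1/4:ℝ) * (4:ℝ) ^ (1/4:ℝ))) *
          (M1 * M4 ^ (1/2:ℝ) * N5 ^ (1/4:ℝ) * N6 ^ (1/4:ℝ) *
            (n1.toReal * n2.toReal * n3.toReal * n4.toReal * n5.toReal * n6.toReal)) := by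
          ring
      _ = 16 * M1 * M4 ^ ((1:ℝ)/2) * N5 ^ ((1:ℝ)/4) * N6 ^ ((1:ℝ)/4) *
          (n1.toReal * n2.toReal * n3.toReal * n4.toReal * n5.toReal * n6.toReal) := by
          rw [h42, h44]
          norm_num
          ring
  -- put everything together
  have hLHSnn : 0 ≤ ∫ ξ1 : ℝ, ∫ ξ2 : ℝ, ∫ ξ3 : ℝ, ∫ ξ4 : ℝ, ∫ ξ5 : ℝ,
      φ1 (ξ2 + ξ3) * φ4 (ξ5 + -(ξ1 + ξ2 + ξ3 + ξ4 + ξ5)) *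
      (‖f1 ξ1‖ * ‖f2 ξ2‖ * ‖f3 ξ3‖ * ‖f4 ξ4‖ * ‖f5 ξ5‖ *
        ‖f6 (-(ξ1 + ξ2 + ξ3 + ξ4 + ξ5))‖) :=
    integral_nonneg fun ξ1 => integral_nonneg fun ξ2 => integral_nonneg fun ξ3 =>
      integral_nonneg fun ξ4 => integral_nonneg (hbase_nn ξ1 ξ2 ξ3 ξ4)
  have hfinal : ENNReal.ofReal (∫ ξ1 : ℝ, ∫ ξ2 : ℝ, ∫ ξ3 : ℝ, ∫ ξ4 : ℝ, ∫ ξ5 : ℝ,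
        φ1 (ξ2 + ξ3) * φ4 (ξ5 + -(ξ1 + ξ2 + ξ3 + ξ4 + ξ5)) *
        (‖f1 ξ1‖ * ‖f2 ξ2‖ * ‖f3 ξ3‖ * ‖f4 ξ4‖ * ‖f5 ξ5‖ *
          ‖f6 (-(ξ1 + ξ2 + ξ3 + ξ4 + ξ5))‖))
      ≤ ENNReal.ofReal (4 * M1) * ENNReal.ofReal (4 * M4) ^ (1/2:ℝ) *
          ENNReal.ofReal (4 * N5) ^ (1/4:ℝ) * ENNReal.ofReal (4 * N6) ^ (1/4:ℝ) *
          ((n1 * n2 * n3 * n4) * (n5 * n6)) := by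
    calc ENNReal.ofReal (∫ ξ1 : ℝ, ∫ ξ2 : ℝ, ∫ ξ3 : ℝ, ∫ ξ4 : ℝ, ∫ ξ5 : ℝ,
          φ1 (ξ2 + ξ3) * φ4 (ξ5 + -(ξ1 + ξ2 + ξ3 + ξ4 + ξ5)) *
          (‖f1 ξ1‖ * ‖f2 ξ2‖ * ‖f3 ξ3‖ * ‖f4 ξ4‖ * ‖f5 ξ5‖ *
            ‖f6 (-(ξ1 + ξ2 + ξ3 + ξ4 + ξ5))‖))
        ≤ ∫⁻ ξ1 : ℝ, F1 ξ1 *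
            ∫⁻ ξ2 : ℝ, F2 ξ2 * ∫⁻ ξ3 : ℝ, F3 ξ3 * (χ1 (ξ2 + ξ3) *
              ∫⁻ ξ4 : ℝ, F4 ξ4 * (χ4 (-(ξ1 + ξ2 + ξ3 + ξ4)) *
                ∫⁻ ξ5 : ℝ, F5 ξ5 * F6 (-(ξ1 + ξ2 + ξ3 + ξ4 + ξ5)))) := key1
      _ ≤ (∫⁻ t, χ1 t) *
            (((∫⁻ t, χ4 t) * ((∫⁻ x, F5 x ^ (2:ℝ)) ^ (1/2:ℝ) *
              (∫⁻ x, F6 x ^ (2:ℝ)) ^ (1/2:ℝ))) ^ (1/2:ℝ) *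
              ((∫⁻ t, F5 t) * (∫⁻ t, F6 t)) ^ (1/2:ℝ)) *
            ((∫⁻ x, F1 x ^ (2:ℝ)) ^ (1/2:ℝ) * (∫⁻ x, F2 x ^ (2:ℝ)) ^ (1/2:ℝ) *
             (∫⁻ x, F3 x ^ (2:ℝ)) ^ (1/2:ℝ) * (∫⁻ x, F4 x ^ (2:ℝ)) ^ (1/2:ℝ)) :=
          stage2 hFm1 hFm2 hFm3 hFm4 hFm5 hFm6 hχ1m hχ4m hχ4le
      _ = (∫⁻ t, χ1 t) *
            (((∫⁻ t, χ4 t) * (n5 * n6)) ^ (1/2:ℝ) *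
              ((∫⁻ t, F5 t) * (∫⁻ t, F6 t)) ^ (1/2:ℝ)) * (n1 * n2 * n3 * n4) := by
          rw [hsn1, hsn2, hsn3, hsn4, hsn5, hsn6]
      _ ≤ ENNReal.ofReal (4 * M1) *
            ((ENNReal.ofReal (4 * M4) * (n5 * n6)) ^ (1/2:ℝ) *
              ((n5 * ENNReal.ofReal (4 * N5) ^ (1/2:ℝ)) *
               (n6 * ENNReal.ofReal (4 * N6) ^ (1/2:ℝ))) ^ (1/2:ℝ)) *
            (n1 * n2 * n3 * n4) := by
          gcongr
      _ = ENNReal.ofReal (4 * M1) * ENNReal.ofReal (4 * M4) ^ (1/2:ℝ) *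
            ENNReal.ofReal (4 * N5) ^ (1/4:ℝ) * ENNReal.ofReal (4 * N6) ^ (1/4:ℝ) *
            ((n1 * n2 * n3 * n4) * (n5 * n6)) :=
          final_alg _ _ _ _ n5 n6 (n1 * n2 * n3 * n4)
  have hT2top : ENNReal.ofReal (4 * M1) * ENNReal.ofReal (4 * M4) ^ (1/2:ℝ) *
      ENNReal.ofReal (4 * N5) ^ (1/4:ℝ) * ENNReal.ofReal (4 * N6) ^ (1/4:ℝ) *
      ((n1 * n2 * n3 * n4) * (n5 * n6)) ≠ ∞ := by
    refine ENNReal.mul_ne_top (ENNReal.mul_ne_top (ENNReal.mul_ne_top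
      (ENNReal.mul_ne_top ENNReal.ofReal_ne_top
        (ENNReal.rpow_ne_top_of_nonneg (by norm_num) ENNReal.ofReal_ne_top))
      (ENNReal.rpow_ne_top_of_nonneg (by norm_num) ENNReal.ofReal_ne_top))
      (ENNReal.rpow_ne_top_of_nonneg (by norm_num) ENNReal.ofReal_ne_top)) ?_
    exact ENNReal.mul_ne_top
      (ENNReal.mul_ne_top (ENNReal.mul_ne_top
        (ENNReal.mul_ne_top hf1.2.ne hf2.2.ne) hf3.2.ne) hf4.2.ne)
      (ENNReal.mul_ne_top hf5.2.ne hf6.2.ne)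
  calc (∫ ξ1 : ℝ, ∫ ξ2 : ℝ, ∫ ξ3 : ℝ, ∫ ξ4 : ℝ, ∫ ξ5 : ℝ,
        φ1 (ξ2 + ξ3) * φ4 (ξ5 + -(ξ1 + ξ2 + ξ3 + ξ4 + ξ5)) *
        (‖f1 ξ1‖ * ‖f2 ξ2‖ * ‖f3 ξ3‖ * ‖f4 ξ4‖ * ‖f5 ξ5‖ *
          ‖f6 (-(ξ1 + ξ2 + ξ3 + ξ4 + ξ5))‖))
      = (ENNReal.ofReal (∫ ξ1 : ℝ, ∫ ξ2 : ℝ, ∫ ξ3 : ℝ, ∫ ξ4 : ℝ, ∫ ξ5 : ℝ,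
          φ1 (ξ2 + ξ3) * φ4 (ξ5 + -(ξ1 + ξ2 + ξ3 + ξ4 + ξ5)) *
          (‖f1 ξ1‖ * ‖f2 ξ2‖ * ‖f3 ξ3‖ * ‖f4 ξ4‖ * ‖f5 ξ5‖ *
            ‖f6 (-(ξ1 + ξ2 + ξ3 + ξ4 + ξ5))‖))).toReal :=
        (ENNReal.toReal_ofReal hLHSnn).symm
    _ ≤ (ENNReal.ofReal (4 * M1) * ENNReal.ofReal (4 * M4) ^ (1/2:ℝ) *
          ENNReal.ofReal (4 * N5) ^ (1/4:ℝ) * ENNReal.ofReal (4 * N6) ^ (1/4:ℝ) *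
          ((n1 * n2 * n3 * n4) * (n5 * n6))).toReal :=
        ENNReal.toReal_mono hT2top hfinal
    _ = (4 * M1) * ((4 * M4) ^ (1/2:ℝ)) * ((4 * N5) ^ (1/4:ℝ)) * ((4 * N6) ^ (1/4:ℝ)) *
          ((n1.toReal * n2.toReal * n3.toReal * n4.toReal) *
            (n5.toReal * n6.toReal)) := by
        rw [ENNReal.toReal_mul, ENNReal.toReal_mul, ENNReal.toReal_mul,
          ENNReal.toReal_mul, ENNReal.toReal_mul, ENNReal.toReal_mul,
          ENNReal.toReal_mul, ENNReal.toReal_mul, ENNReal.toReal_mul,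
          ← ENNReal.toReal_rpow, ← ENNReal.toReal_rpow, ← ENNReal.toReal_rpow,
          ENNReal.toReal_ofReal (by positivity), ENNReal.toReal_ofReal (by positivity),
          ENNReal.toReal_ofReal (by positivity), ENNReal.toReal_ofReal (by positivity)]
    _ = 16 * M1 * M4 ^ ((1:ℝ)/2) * N5 ^ ((1:ℝ)/4) * N6 ^ ((1:ℝ)/4) *
          (n1.toReal * n2.toReal * n3.toReal * n4.toReal * n5.toReal * n6.toReal) :=
        hreal
end Main
end
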